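/- arXiv:1707.08456 — 6 statements merged into one kernel-verified Lean document; each statement's English description precedes it below -/
import Mathlib

section
/- For every N ≥ 2, the characteristic polynomial of M_F(N) equals ∏_{k=0}^{N} (x − k)^{m_k}, where m_k denotes the number of partitions of N − k all of whose parts are at least 2 (so m_N = 1, m_{N−1} = 0, and m_k is the number of tuples (ξ_2, …, ξ_{N−k}) of nonnegative integers with Σ_{l≥2} l·ξ_l = N − k). In particular, the multiplicity of the eigenvalue k of M_F(N) equals m_k, and the eigenvalues N, N−2 and N−3 (when present) are simple. -/
/-- `AddBox α μ` means that the Young diagram `μ` is obtained from the Young diagram `α`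
by adding a single box; equivalently, `α` is obtained from `μ` by removing a box:
the diagram of `α` is contained in the diagram of `μ` and `μ` has exactly one more cell. -/
def AddBox (α μ : YoungDiagram) : Prop :=
  α ≤ μ ∧ μ.card = α.card + 1

/-- `MoveBox μ ν` (written `μ/ν = □` in the paper): `μ ≠ ν` and some Young diagram can be
obtained from both `μ` and `ν` by removing a single box, i.e. `μ` is obtained from `ν`
by moving a single box. -/
def MoveBox (μ ν : YoungDiagram) : Prop :=
  μ ≠ ν ∧ ∃ α : YoungDiagram, AddBox α μ ∧ AddBox α ν

/-- `nBox μ` is the number `n_μ` of Young diagrams obtained from `μ` by removing a box. -/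
noncomputable def nBox (μ : YoungDiagram) : ℕ :=
  Nat.card {α : YoungDiagram // AddBox α μ}

/-- Partitions of `N` with at most `d` parts, identified with Young diagrams with `N` boxes
whose first column has height at most `d`. -/
abbrev PartLE (N d : ℕ) : Type :=
  {μ : YoungDiagram // μ.card = N ∧ μ.colLen 0 ≤ d}

instance : DecidableEq YoungDiagram := fun μ ν =>
  decidable_of_iff (μ.cells = ν.cells) (YoungDiagram.ext_iff).symm

theorem cell_lt_card {μ : YoungDiagram} {i j : ℕ} (h : (i, j) ∈ μ.cells) :
    i < μ.card ∧ j < μ.card := by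
  rw [YoungDiagram.mem_cells] at h
  constructor
  · have hsub : Finset.range (i + 1) ×ˢ ({j} : Finset ℕ) ⊆ μ.cells := by
      rintro ⟨a, b⟩ hab
      rw [Finset.mem_product, Finset.mem_range, Finset.mem_singleton] at hab
      rw [YoungDiagram.mem_cells]
      obtain ⟨h1, h2⟩ := hab
      subst h2
      exact μ.up_left_mem (Nat.lt_succ_iff.mp h1) le_rfl h
    have := Finset.card_le_card hsub
    simpa [YoungDiagram.card] using this
  · have hsub : ({i} : Finset ℕ) ×ˢ Finset.range (j + 1) ⊆ μ.cells := by
      rintro ⟨a, b⟩ hab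
      rw [Finset.mem_product, Finset.mem_range, Finset.mem_singleton] at hab
      rw [YoungDiagram.mem_cells]
      obtain ⟨h1, h2⟩ := hab
      subst h1
      exact μ.up_left_mem le_rfl (Nat.lt_succ_iff.mp h2) h
    have := Finset.card_le_card hsub
    simpa [YoungDiagram.card] using this

noncomputable instance (N d : ℕ) : Fintype (PartLE N d) := by
  apply Fintype.ofInjective
    (β := {s : Finset (ℕ × ℕ) // s ∈ (Finset.range N ×ˢ Finset.range N).powerset})
    (f := fun μ => ⟨μ.1.cells, by
      rw [Finset.mem_powerset]
      rintro ⟨i, j⟩ hc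
      have h := cell_lt_card hc
      rw [μ.2.1] at h
      simp only [Finset.mem_product, Finset.mem_range]
      exact h⟩)
  rintro ⟨μ, hμ⟩ ⟨ν, hν⟩ h
  simp only [Subtype.mk.injEq] at h ⊢
  exact YoungDiagram.ext h

open scoped Classical in
/-- The Teleportation Matrix `M_F^d(N)`, indexed by the partitions of `N` with at most
`d` parts: the diagonal entry at `μ` is `n_μ`, the off-diagonal entry at `(μ, ν)` is `1`
if `μ/ν = □` and `0` otherwise.  For `d ≥ N` this is the full matrix `M_F(N)`. -/
noncomputable def MF (N d : ℕ) : Matrix (PartLE N d) (PartLE N d) ℝ :=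
  fun μ ν => if μ = ν then (nBox μ.1 : ℝ) else if MoveBox μ.1 ν.1 then 1 else 0


/-!
Let `B` be the branching matrix from partitions of `N` to partitions of `N + 1`, with entry `1`
when the second is obtained from the first by adding a box. A common sub-diagram of two distinct
diagrams of the same size is their meet and a common super-diagram is their join, so `Bᵀ B` is
`M_F(N + 1)`, and `B Bᵀ` is `M_F(N) + 1` because every diagram has exactly one more addable than
removable box. As `B Bᵀ` and `Bᵀ B` have the same nonzero spectrum, `M_F(N + 1)` has the
eigenvalues of `M_F(N)` shifted by one together with the eigenvalue `0`, of multiplicity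
`p(N + 1) - p(N)`, the number of partitions of `N + 1` without a part `1`. Induction on `N`.
-/

namespace YoungDiagram

theorem colLen_zero_le_card (μ : YoungDiagram) : μ.colLen 0 ≤ μ.card :=
  μ.colLen_eq_card ▸ Finset.card_filter_le _ _

theorem eq_of_le_of_card_le {μ ν : YoungDiagram} (h : μ ≤ ν) (hc : ν.card ≤ μ.card) : μ = ν :=
  YoungDiagram.ext (Finset.eq_of_subset_of_card_le (cells_subset_iff.mpr h) hc)

theorem card_sup_add_card_inf (μ ν : YoungDiagram) :
    (μ ⊔ ν).card + (μ ⊓ ν).card = μ.card + ν.card := by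
  simp only [YoungDiagram.card, cells_sup, cells_inf, Finset.card_union_add_card_inter]

def IsAddable (μ : YoungDiagram) (c : ℕ × ℕ) : Prop :=
  c ∉ μ ∧ ∀ d < c, d ∈ μ

def IsRemovable (μ : YoungDiagram) (c : ℕ × ℕ) : Prop :=
  c ∈ μ ∧ ∀ d, c < d → d ∉ μ

def insertCell (μ : YoungDiagram) (c : ℕ × ℕ) (hc : μ.IsAddable c) : YoungDiagram where
  cells := insert c μ.cells
  isLowerSet a b hba ha := by
    simp only [Finset.coe_insert, Set.mem_insert_iff, Finset.mem_coe, mem_cells] at ha ⊢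
    rcases ha with rfl | ha
    · exact hba.eq_or_lt.imp_right (hc.2 b)
    · exact Or.inr (μ.isLowerSet hba ha)

def eraseCell (μ : YoungDiagram) (c : ℕ × ℕ) (hc : μ.IsRemovable c) : YoungDiagram where
  cells := μ.cells.erase c
  isLowerSet a b hba ha := by
    simp only [Finset.coe_erase, Set.mem_sdiff, Finset.mem_coe, mem_cells,
      Set.mem_singleton_iff] at ha ⊢
    refine ⟨μ.isLowerSet hba ha.1, ?_⟩
    rintro rfl
    exact hc.2 a (hba.lt_of_ne (Ne.symm ha.2)) ha.1

section Cells

variable {μ : YoungDiagram} {c d : ℕ × ℕ}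

theorem mem_insertCell {hc : μ.IsAddable c} : d ∈ μ.insertCell c hc ↔ d = c ∨ d ∈ μ :=
  Finset.mem_insert

theorem mem_eraseCell {hc : μ.IsRemovable c} : d ∈ μ.eraseCell c hc ↔ d ≠ c ∧ d ∈ μ :=
  Finset.mem_erase

end Cells

theorem isAddable_iff {μ : YoungDiagram} {i j : ℕ} :
    μ.IsAddable (i, j) ↔ μ.rowLen i = j ∧ ∀ k < i, j < μ.rowLen k := by
  simp only [IsAddable, mem_iff_lt_rowLen, not_lt, Prod.forall, Prod.lt_iff]
  constructor
  · rintro ⟨hj, hlt⟩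
    refine ⟨?_, fun k hk => hlt k j (Or.inl ⟨hk, le_rfl⟩)⟩
    rcases Nat.eq_zero_or_pos j with rfl | hj0
    · omega
    · have := hlt i (j - 1) (Or.inr ⟨le_rfl, by omega⟩)
      omega
  · rintro ⟨rfl, hrow⟩
    refine ⟨le_rfl, fun a b hab => ?_⟩
    rcases hab with ⟨ha, hb⟩ | ⟨ha, hb⟩
    · exact hb.trans_lt (hrow a ha)
    · exact hb.trans_le (μ.rowLen_anti a i ha)

theorem isRemovable_iff {μ : YoungDiagram} {i j : ℕ} :
    μ.IsRemovable (i, j) ↔ μ.rowLen i = j + 1 ∧ μ.rowLen (i + 1) ≤ j := by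
  simp only [IsRemovable, mem_iff_lt_rowLen, not_lt, Prod.forall, Prod.lt_iff]
  constructor
  · rintro ⟨hj, hgt⟩
    have h1 := hgt i (j + 1) (Or.inr ⟨le_rfl, by omega⟩)
    have h2 := hgt (i + 1) j (Or.inl ⟨by omega, le_rfl⟩)
    omega
  · rintro ⟨hi, hi1⟩
    refine ⟨by omega, fun a b hab => ?_⟩
    rcases hab with ⟨ha, hb⟩ | ⟨ha, hb⟩
    · exact (μ.rowLen_anti (i + 1) a ha).trans (hi1.trans hb)
    · exact (μ.rowLen_anti i a ha).trans (hi ▸ hb)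

theorem isAddable_zero_rowLen (μ : YoungDiagram) : μ.IsAddable (0, μ.rowLen 0) :=
  isAddable_iff.mpr ⟨rfl, by simp⟩

theorem IsRemovable.isAddable_succ {μ : YoungDiagram} {i j : ℕ} (h : μ.IsRemovable (i, j)) :
    μ.IsAddable (i + 1, μ.rowLen (i + 1)) := by
  obtain ⟨hi, hi1⟩ := isRemovable_iff.mp h
  exact isAddable_iff.mpr ⟨rfl, fun k hk => by have := μ.rowLen_anti k i (by omega); omega⟩

/-- The addable cells are the cell ending the first row together with, for each removable
cell, the cell ending the row below it. -/
theorem natCard_isAddable (μ : YoungDiagram) :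
    Nat.card {c // μ.IsAddable c} = Nat.card {c // μ.IsRemovable c} + 1 := by
  have : Finite {c // μ.IsRemovable c} := Set.Finite.to_subtype (s := {c | μ.IsRemovable c})
    (μ.cells.finite_toSet.subset fun _ hc => hc.1)
  rw [← Finite.card_option]
  refine (Nat.card_eq_of_bijective (fun o => o.elim ⟨_, μ.isAddable_zero_rowLen⟩
    fun c => ⟨_, IsRemovable.isAddable_succ (i := c.1.1) (j := c.1.2) c.2⟩) ⟨?_, ?_⟩).symm
  · rintro (_ | ⟨⟨i, j⟩, h⟩) (_ | ⟨⟨i', j'⟩, h'⟩) heq <;>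
      simp only [Option.elim, Subtype.mk.injEq, Prod.mk.injEq] at heq
    · rfl
    · omega
    · omega
    · obtain rfl : i = i' := by omega
      have := (isRemovable_iff.mp h).1
      have := (isRemovable_iff.mp h').1
      obtain rfl : j = j' := by omega
      rfl
  · rintro ⟨⟨_ | i, j⟩, h⟩
    · exact ⟨none, Subtype.ext (by simp [(isAddable_iff.mp h).1])⟩
    · obtain ⟨rfl, hlt⟩ := isAddable_iff.mp h
      have := hlt i (Nat.lt_succ_self i)
      exact ⟨some ⟨(i, μ.rowLen i - 1), isRemovable_iff.mpr ⟨by omega, by omega⟩⟩, rfl⟩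

theorem isAddable_colLen_zero (μ : YoungDiagram) : μ.IsAddable (μ.colLen 0, 0) := by
  refine ⟨fun h => (mem_iff_lt_colLen.mp h).false, fun ⟨a, b⟩ hd => ?_⟩
  obtain ⟨ha, hb⟩ | ⟨-, hb⟩ := Prod.lt_iff.mp hd
  · obtain rfl : b = 0 := Nat.le_zero.mp hb
    exact mem_iff_lt_colLen.mpr ha
  · exact absurd hb (Nat.not_lt_zero b)

def addPartOne (μ : YoungDiagram) : YoungDiagram :=
  μ.insertCell (μ.colLen 0, 0) μ.isAddable_colLen_zero

theorem card_addPartOne (μ : YoungDiagram) : μ.addPartOne.card = μ.card + 1 :=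
  Finset.card_insert_of_notMem μ.isAddable_colLen_zero.1

theorem colLen_addPartOne (μ : YoungDiagram) : μ.addPartOne.colLen 0 = μ.colLen 0 + 1 :=
  eq_of_forall_lt_iff fun i => by
    rw [← mem_iff_lt_colLen, addPartOne, mem_insertCell, mem_iff_lt_colLen, Prod.mk.injEq]
    omega

theorem rowLen_addPartOne (μ : YoungDiagram) : μ.addPartOne.rowLen (μ.colLen 0) = 1 :=
  eq_of_forall_lt_iff fun j => by
    have hj : (μ.colLen 0, j) ∉ μ := fun h =>
      (mem_iff_lt_colLen.mp (μ.up_left_mem le_rfl (Nat.zero_le j) h)).false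
    rw [← mem_iff_lt_rowLen, addPartOne, mem_insertCell, Prod.mk.injEq]
    simp only [true_and, hj, or_false]
    omega

theorem one_mem_rowLens_addPartOne (μ : YoungDiagram) : 1 ∈ μ.addPartOne.rowLens := by
  simp only [rowLens, List.mem_map, List.mem_range, colLen_addPartOne]
  exact ⟨μ.colLen 0, Nat.lt_succ_self _, μ.rowLen_addPartOne⟩

theorem addPartOne_injective : Function.Injective addPartOne := by
  intro μ ν h
  have hcol : μ.colLen 0 = ν.colLen 0 := by
    simpa only [colLen_addPartOne, Nat.add_right_cancel_iff] using congrArg (colLen · 0) h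
  have hcells : insert (μ.colLen 0, 0) μ.cells = insert (ν.colLen 0, 0) ν.cells :=
    congrArg cells h
  refine YoungDiagram.ext ?_
  rw [← Finset.erase_insert μ.isAddable_colLen_zero.1, hcells, hcol,
    Finset.erase_insert ν.isAddable_colLen_zero.1]

theorem exists_addPartOne_eq {ν : YoungDiagram} (h : 1 ∈ ν.rowLens) :
    ∃ μ : YoungDiagram, μ.addPartOne = ν := by
  obtain ⟨i, hi, hrow⟩ : ∃ i < ν.colLen 0, ν.rowLen i = 1 := by
    simpa only [rowLens, List.mem_map, List.mem_range] using h
  obtain ⟨r, hr⟩ : ∃ r, ν.colLen 0 = r + 1 := Nat.exists_eq_succ_of_ne_zero (by omega)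
  have hlast : ν.rowLen r = 1 := by
    have := ν.rowLen_anti i r (by omega)
    have : 0 < ν.rowLen r := mem_iff_lt_rowLen.mp (mem_iff_lt_colLen.mpr (by omega))
    omega
  have hbelow : ν.rowLen (r + 1) = 0 := by
    by_contra hne
    have := mem_iff_lt_colLen.mp (mem_iff_lt_rowLen.mpr (Nat.pos_of_ne_zero hne))
    omega
  have hrem : ν.IsRemovable (r, 0) := isRemovable_iff.mpr ⟨hlast, hbelow.le⟩
  have hcol : (ν.eraseCell (r, 0) hrem).colLen 0 = r := eq_of_forall_lt_iff fun k => by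
    rw [← mem_iff_lt_colLen, mem_eraseCell, mem_iff_lt_colLen, Ne, Prod.mk.injEq]
    omega
  refine ⟨ν.eraseCell (r, 0) hrem, YoungDiagram.ext ?_⟩
  change insert ((ν.eraseCell (r, 0) hrem).colLen 0, 0) (ν.cells.erase (r, 0)) = ν.cells
  rw [hcol, Finset.insert_erase hrem.1]

end YoungDiagram

open YoungDiagram

theorem addBox_iff_exists_insert {α μ : YoungDiagram} :
    AddBox α μ ↔ ∃ c ∉ α, insert c α.cells = μ.cells := by
  rw [AddBox, ← cells_subset_iff, eq_comm]
  exact Finset.exists_eq_insert_iff.symm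

theorem addBox_insertCell (μ : YoungDiagram) (c : ℕ × ℕ) (hc : μ.IsAddable c) :
    AddBox μ (μ.insertCell c hc) :=
  addBox_iff_exists_insert.mpr ⟨c, hc.1, rfl⟩

theorem addBox_eraseCell (μ : YoungDiagram) (c : ℕ × ℕ) (hc : μ.IsRemovable c) :
    AddBox (μ.eraseCell c hc) μ :=
  addBox_iff_exists_insert.mpr ⟨c, μ.cells.notMem_erase c, Finset.insert_erase hc.1⟩

section InsertEq

variable {α μ : YoungDiagram} {c : ℕ × ℕ}

theorem mem_iff_of_insert_eq (h : insert c α.cells = μ.cells) (d : ℕ × ℕ) :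
    d ∈ μ ↔ d = c ∨ d ∈ α := by
  rw [← mem_cells, ← h, Finset.mem_insert, mem_cells]

theorem isAddable_of_insert_eq (hc : c ∉ α) (h : insert c α.cells = μ.cells) :
    α.IsAddable c :=
  ⟨hc, fun d hd => ((mem_iff_of_insert_eq h d).mp
    (μ.isLowerSet hd.le ((mem_iff_of_insert_eq h c).mpr (Or.inl rfl)))).resolve_left hd.ne⟩

theorem isRemovable_of_insert_eq (hc : c ∉ α) (h : insert c α.cells = μ.cells) :
    μ.IsRemovable c :=
  ⟨(mem_iff_of_insert_eq h c).mpr (Or.inl rfl), fun d hd hdμ =>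
    hc (α.isLowerSet hd.le (((mem_iff_of_insert_eq h d).mp hdμ).resolve_left hd.ne'))⟩

end InsertEq

theorem nBox_eq_natCard_isRemovable (μ : YoungDiagram) :
    nBox μ = Nat.card {c // μ.IsRemovable c} := by
  refine (Nat.card_eq_of_bijective
    (fun c => (⟨μ.eraseCell c.1 c.2, addBox_eraseCell _ _ c.2⟩ : {α // AddBox α μ}))
    ⟨fun c c' h => ?_, fun α => ?_⟩).symm
  · exact Subtype.ext <| μ.cells.erase_injOn c.2.1 c'.2.1 <|
      congrArg (fun α : {α // AddBox α μ} => α.1.cells) h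
  · obtain ⟨c, hc, h⟩ := addBox_iff_exists_insert.mp α.2
    refine ⟨⟨c, isRemovable_of_insert_eq hc h⟩, Subtype.ext (YoungDiagram.ext ?_)⟩
    exact (congrArg (Finset.erase · c) h.symm).trans (Finset.erase_insert hc)

theorem natCard_addBox_eq_natCard_isAddable (μ : YoungDiagram) :
    Nat.card {ν // AddBox μ ν} = Nat.card {c // μ.IsAddable c} := by
  refine (Nat.card_eq_of_bijective
    (fun c => (⟨μ.insertCell c.1 c.2, addBox_insertCell _ _ c.2⟩ : {ν // AddBox μ ν}))
    ⟨fun c c' h => ?_, fun ν => ?_⟩).symm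
  · exact Subtype.ext <| (Finset.insert_inj c.2.1).mp <|
      congrArg (fun ν : {ν // AddBox μ ν} => ν.1.cells) h
  · obtain ⟨c, hc, h⟩ := addBox_iff_exists_insert.mp ν.2
    exact ⟨⟨c, isAddable_of_insert_eq hc h⟩, Subtype.ext (YoungDiagram.ext h)⟩

theorem natCard_addBox (μ : YoungDiagram) : Nat.card {ν // AddBox μ ν} = nBox μ + 1 := by
  rw [natCard_addBox_eq_natCard_isAddable, natCard_isAddable, nBox_eq_natCard_isRemovable]

theorem AddBox.eq_inf {γ μ ν : YoungDiagram} (hμ : AddBox γ μ) (hν : AddBox γ ν)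
    (hne : μ ≠ ν) : γ = μ ⊓ ν := by
  refine eq_of_le_of_card_le (le_inf hμ.1 hν.1) ?_
  by_contra! hlt
  have hinf : μ ⊓ ν = μ := eq_of_le_of_card_le inf_le_left (by have := hμ.2; omega)
  exact hne (eq_of_le_of_card_le (inf_eq_left.mp hinf) (by have := hμ.2; have := hν.2; omega))

theorem AddBox.eq_sup {α β μ : YoungDiagram} (hα : AddBox α μ) (hβ : AddBox β μ)
    (hne : α ≠ β) : μ = α ⊔ β := by
  refine (eq_of_le_of_card_le (sup_le hα.1 hβ.1) ?_).symm
  by_contra! hlt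
  have hsup : α ⊔ β = α := (eq_of_le_of_card_le le_sup_left (by have := hα.2; omega)).symm
  exact hne (eq_of_le_of_card_le (sup_eq_left.mp hsup) (by have := hα.2; have := hβ.2; omega)).symm

theorem MoveBox.addBox_sup {α β : YoungDiagram} (h : MoveBox α β) :
    AddBox α (α ⊔ β) ∧ AddBox β (α ⊔ β) := by
  obtain ⟨hne, γ, hα, hβ⟩ := h
  have := card_sup_add_card_inf α β
  have := hα.2
  have := hβ.2
  rw [hα.eq_inf hβ hne] at *
  exact ⟨⟨le_sup_left, by omega⟩, ⟨le_sup_right, by omega⟩⟩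

theorem moveBox_of_addBox {α β μ : YoungDiagram} (hα : AddBox α μ) (hβ : AddBox β μ)
    (hne : α ≠ β) : MoveBox α β := by
  have := card_sup_add_card_inf α β
  have := hα.2
  have := hβ.2
  rw [hα.eq_sup hβ hne] at *
  exact ⟨hne, α ⊓ β, ⟨inf_le_left, by omega⟩, ⟨inf_le_right, by omega⟩⟩

open scoped Classical in
theorem natCard_addBox_and_addBox_of_ne {μ ν : YoungDiagram} (hne : μ ≠ ν) :
    Nat.card {α // AddBox α μ ∧ AddBox α ν} = if MoveBox μ ν then 1 else 0 := by
  have : Subsingleton {α // AddBox α μ ∧ AddBox α ν} := ⟨fun a b => Subtype.ext <|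
    (a.2.1.eq_inf a.2.2 hne).trans (b.2.1.eq_inf b.2.2 hne).symm⟩
  split_ifs with h
  · obtain ⟨-, γ, hγ⟩ := h
    exact Nat.card_of_subsingleton ⟨γ, hγ⟩
  · have : IsEmpty {α // AddBox α μ ∧ AddBox α ν} := ⟨fun a => h ⟨hne, a.1, a.2⟩⟩
    exact Nat.card_of_isEmpty

open scoped Classical in
theorem natCard_addBox_and_addBox_of_ne' {α β : YoungDiagram} (hne : α ≠ β) :
    Nat.card {μ // AddBox α μ ∧ AddBox β μ} = if MoveBox α β then 1 else 0 := by
  have : Subsingleton {μ // AddBox α μ ∧ AddBox β μ} := ⟨fun a b => Subtype.ext <|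
    (a.2.1.eq_sup a.2.2 hne).trans (b.2.1.eq_sup b.2.2 hne).symm⟩
  split_ifs with h
  · exact Nat.card_of_subsingleton ⟨α ⊔ β, h.addBox_sup⟩
  · have : IsEmpty {μ // AddBox α μ ∧ AddBox β μ} :=
      ⟨fun a => h (moveBox_of_addBox a.2.1 a.2.2 hne)⟩
    exact Nat.card_of_isEmpty

def partLEEquiv (N : ℕ) : PartLE N N ≃ {μ : YoungDiagram // μ.card = N} :=
  Equiv.subtypeEquivRight fun μ => ⟨And.left, fun h => ⟨h, h ▸ μ.colLen_zero_le_card⟩⟩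

instance (N : ℕ) (P : YoungDiagram → Prop) : Finite {μ : YoungDiagram // μ.card = N ∧ P μ} :=
  have := Finite.of_equiv _ (partLEEquiv N)
  Finite.of_injective (fun μ => (⟨μ.1, μ.2.1⟩ : {μ : YoungDiagram // μ.card = N}))
    fun _ _ h => Subtype.ext (congrArg Subtype.val h :)

theorem card_partLE (N : ℕ) :
    Fintype.card (PartLE N N) = Nat.card {μ : YoungDiagram // μ.card = N} := by
  rw [← Nat.card_eq_fintype_card, Nat.card_congr (partLEEquiv N)]

theorem natCard_subtype_partLE {N : ℕ} {P : YoungDiagram → Prop}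
    (hP : ∀ {μ}, P μ → μ.card = N) :
    Nat.card {μ : PartLE N N // P μ.1} = Nat.card {μ // P μ} :=
  Nat.card_congr <| ((partLEEquiv N).subtypeEquiv fun _ => Iff.rfl).trans
    (Equiv.subtypeSubtypeEquivSubtype hP)

theorem natCard_card_eq_zero :
    Nat.card {μ : YoungDiagram // μ.card = 0} =
      Nat.card {γ : YoungDiagram // γ.card = 0 ∧ ∀ x ∈ γ.rowLens, 2 ≤ x} :=
  Nat.card_congr <| Equiv.subtypeEquivRight fun γ => ⟨fun h => ⟨h, fun x hx => by
    have := List.length_pos_of_mem hx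
    have := γ.colLen_zero_le_card
    rw [length_rowLens] at *
    omega⟩, And.left⟩

/-- Partitions of `N + 1` with a part equal to `1` are those of `N` with such a part added. -/
theorem natCard_card_eq_succ (N : ℕ) :
    Nat.card {μ : YoungDiagram // μ.card = N + 1} =
      Nat.card {γ : YoungDiagram // γ.card = N + 1 ∧ ∀ x ∈ γ.rowLens, 2 ≤ x} +
        Nat.card {μ : YoungDiagram // μ.card = N} := by
  let Q : YoungDiagram → Prop := fun γ => ∀ x ∈ γ.rowLens, 2 ≤ x
  have hsplit : {γ : YoungDiagram // γ.card = N + 1 ∧ Q γ} ⊕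
      {γ : YoungDiagram // γ.card = N + 1 ∧ ¬ Q γ} ≃ {μ : YoungDiagram // μ.card = N + 1} :=
    ((Equiv.subtypeSubtypeEquivSubtypeInter _ Q).symm.sumCongr
      (Equiv.subtypeSubtypeEquivSubtypeInter _ _).symm).trans (Equiv.sumCompl _)
  have hnotQ : ∀ γ : YoungDiagram, ¬ Q γ ↔ 1 ∈ γ.rowLens := fun γ => by
    refine ⟨fun h => ?_, fun h hQ => absurd (hQ 1 h) (by norm_num)⟩
    obtain ⟨x, hx, hx2⟩ := not_forall₂.mp h
    obtain rfl : x = 1 := by have := γ.pos_of_mem_rowLens x hx; omega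
    exact hx
  rw [← Nat.card_congr hsplit, Nat.card_sum]
  congr 1
  refine (Nat.card_eq_of_bijective (fun μ => ⟨μ.1.addPartOne, by rw [card_addPartOne, μ.2],
    (hnotQ _).mpr μ.1.one_mem_rowLens_addPartOne⟩) ⟨fun μ ν h => ?_, ?_⟩).symm
  · exact Subtype.ext (addPartOne_injective (Subtype.ext_iff.mp h))
  · rintro ⟨ν, hν, hQ⟩
    obtain ⟨μ, rfl⟩ := exists_addPartOne_eq ((hnotQ ν).mp hQ)
    exact ⟨⟨μ, by rw [card_addPartOne] at hν; omega⟩, rfl⟩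

open scoped Classical in
noncomputable def branchMatrix (N : ℕ) : Matrix (PartLE N N) (PartLE (N + 1) (N + 1)) ℝ :=
  Matrix.of fun α μ => if AddBox α.1 μ.1 then 1 else 0

section branchMatrix

open scoped Matrix

variable {N : ℕ}

theorem branchMatrix_transpose_mul_apply (μ ν : PartLE (N + 1) (N + 1)) :
    ((branchMatrix N)ᵀ * branchMatrix N) μ ν =
      Nat.card {α : PartLE N N // AddBox α.1 μ.1 ∧ AddBox α.1 ν.1} := by
  classical
  simp only [Matrix.mul_apply, Matrix.transpose_apply, branchMatrix, Matrix.of_apply,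
    ite_zero_mul_ite_zero, mul_one, Finset.sum_boole, Nat.card_eq_fintype_card,
    Fintype.card_subtype]

theorem branchMatrix_mul_transpose_apply (α β : PartLE N N) :
    (branchMatrix N * (branchMatrix N)ᵀ) α β =
      Nat.card {μ : PartLE (N + 1) (N + 1) // AddBox α.1 μ.1 ∧ AddBox β.1 μ.1} := by
  classical
  simp only [Matrix.mul_apply, Matrix.transpose_apply, branchMatrix, Matrix.of_apply,
    ite_zero_mul_ite_zero, mul_one, Finset.sum_boole, Nat.card_eq_fintype_card,
    Fintype.card_subtype]

variable (N)

theorem branchMatrix_transpose_mul :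
    (branchMatrix N)ᵀ * branchMatrix N = MF (N + 1) (N + 1) := by
  ext μ ν
  rw [branchMatrix_transpose_mul_apply, natCard_subtype_partLE
    (P := fun α => AddBox α μ.1 ∧ AddBox α ν.1) fun h => by have := h.1.2; have := μ.2.1; omega,
    MF]
  by_cases h : μ = ν
  · subst h
    simp only [if_true, and_self]
    rfl
  · rw [if_neg h, natCard_addBox_and_addBox_of_ne fun h' => h (Subtype.ext h')]
    split_ifs <;> simp

theorem branchMatrix_mul_transpose : branchMatrix N * (branchMatrix N)ᵀ = MF N N + 1 := by
  ext α β
  rw [branchMatrix_mul_transpose_apply, natCard_subtype_partLE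
    (P := fun μ => AddBox α.1 μ ∧ AddBox β.1 μ) fun h => by have := h.1.2; have := α.2.1; omega,
    Matrix.add_apply, MF, Matrix.one_apply]
  by_cases h : α = β
  · subst h
    simp only [if_true, and_self, natCard_addBox]
    push_cast
    rfl
  · rw [if_neg h, if_neg h, add_zero,
      natCard_addBox_and_addBox_of_ne' fun h' => h (Subtype.ext h')]
    split_ifs <;> simp

end branchMatrix

theorem MF_zero : MF 0 0 = 0 := by
  ext μ ν
  have hμ : ∀ α, ¬AddBox α μ.1 := fun α h => by have := h.2; have := μ.2.1; omega
  simp [MF, nBox, MoveBox, hμ]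

open Polynomial

theorem Matrix.charpoly_add_one {n R : Type*} [Fintype n] [DecidableEq n] [CommRing R]
    (M : Matrix n n R) : (M + 1).charpoly = M.charpoly.comp (X - 1) := by
  simpa [sub_eq_add_neg] using M.charpoly_sub_scalar (-1)

theorem Polynomial.X_pow_mul_prod_comp_X_sub_one {R : Type*} [CommRing R] (m : ℕ → ℕ) (n : ℕ) :
    X ^ m (n + 1) * (∏ k ∈ Finset.range (n + 1), (X - C (k : R)) ^ m (n - k)).comp (X - 1) =
      ∏ k ∈ Finset.range (n + 2), (X - C (k : R)) ^ m (n + 1 - k) := by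
  rw [Polynomial.prod_comp, Finset.prod_range_succ' (fun k => (X - C (k : R)) ^ m (n + 1 - k)),
    Nat.cast_zero, C_0, sub_zero, Nat.sub_zero, mul_comm (X ^ _)]
  congr 1
  refine Finset.prod_congr rfl fun k _ => ?_
  rw [pow_comp, sub_comp, X_comp, C_comp, Nat.add_sub_add_right, Nat.cast_succ, C_add, C_1,
    sub_sub, add_comm]

theorem charpoly_MF_succ (N : ℕ) :
    X ^ Fintype.card (PartLE N N) * (MF (N + 1) (N + 1)).charpoly =
      X ^ Fintype.card (PartLE (N + 1) (N + 1)) * (MF N N).charpoly.comp (X - 1) := by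
  have := Matrix.charpoly_mul_comm' (branchMatrix N) (branchMatrix N).transpose
  rw [branchMatrix_mul_transpose, branchMatrix_transpose_mul, Matrix.charpoly_add_one] at this
  exact this.symm

theorem charpoly_MF_general (N : ℕ) :
    (MF N N).charpoly =
      ∏ k ∈ Finset.range (N + 1),
        (Polynomial.X - Polynomial.C (k : ℝ)) ^
          Nat.card {γ : YoungDiagram // γ.card = N - k ∧ ∀ x ∈ γ.rowLens, 2 ≤ x} := by
  induction N with
  | zero =>
    rw [MF_zero, Matrix.charpoly_zero, card_partLE, natCard_card_eq_zero]
    simp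
  | succ n ih =>
    rw [← (isRegular_X_pow (Fintype.card (PartLE n n))).left.eq_iff, charpoly_MF_succ, ih,
      card_partLE, card_partLE, natCard_card_eq_succ, add_comm, pow_add, mul_assoc]
    exact congrArg _ (X_pow_mul_prod_comp_X_sub_one
      (fun j => Nat.card {γ : YoungDiagram // γ.card = j ∧ ∀ x ∈ γ.rowLens, 2 ≤ x}) n)

/-- For every `N ≥ 2`, the characteristic polynomial of `M_F(N)` equals
`∏_{k=0}^{N} (x - k)^{m_k}`, where `m_k` is the number of partitions of `N - k` all of whose
parts are at least `2`. -/
theorem charpoly_MF (N : ℕ) (hN : 2 ≤ N) :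
    (MF N N).charpoly =
      ∏ k ∈ Finset.range (N + 1),
        (Polynomial.X - Polynomial.C (k : ℝ)) ^
          Nat.card {γ : YoungDiagram // γ.card = N - k ∧ ∀ x ∈ γ.rowLens, 2 ≤ x} :=
  charpoly_MF_general N
end

section
/- Let f be the function on partitions determined by f(∅) = 1 and, for every nonempty partition γ of m ≥ 1, f(γ) = Σ f(β), the sum ranging over all partitions β of m−1 obtained from γ by removing a box (so f(γ) is the number of standard Young tableaux of shape γ). Then for every N ≥ 2 and every partition μ of N, Σ_{ν ⊢ N} (M_F(N))_{μν} · f(ν) = N · f(μ); that is, the vector (f(μ))_{μ ⊢ N}, which has strictly positive entries, is an eigenvector of M_F(N) with eigenvalue N. -/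
/-! ### Auxiliary development -/

namespace TeleAux

open YoungDiagram Finset

open scoped Classical

lemma card_le_of_le {α β : YoungDiagram} (h : α ≤ β) : α.card ≤ β.card :=
  Finset.card_le_card (YoungDiagram.cells_subset_iff.mpr h)

lemma eq_of_le_of_card_le {α β : YoungDiagram} (h : α ≤ β) (hc : β.card ≤ α.card) : α = β :=
  YoungDiagram.ext (Finset.eq_of_subset_of_card_le (YoungDiagram.cells_subset_iff.mpr h) hc)

lemma rowLen_eq_succ {μ : YoungDiagram} {i n : ℕ} (h1 : (i, n) ∈ μ) (h2 : (i, n + 1) ∉ μ) :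
    μ.rowLen i = n + 1 := by
  have a := YoungDiagram.mem_iff_lt_rowLen.mp h1
  have b : ¬ (n + 1 < μ.rowLen i) := fun hh => h2 (YoungDiagram.mem_iff_lt_rowLen.mpr hh)
  omega

lemma rowLen_eq_zero {μ : YoungDiagram} {i : ℕ} (h : (i, 0) ∉ μ) : μ.rowLen i = 0 := by
  have b : ¬ (0 < μ.rowLen i) := fun hh => h (YoungDiagram.mem_iff_lt_rowLen.mpr hh)
  omega

lemma rowLen_congr {μ ν : YoungDiagram} {i : ℕ} (h : ∀ j, (i, j) ∈ μ ↔ (i, j) ∈ ν) :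
    μ.rowLen i = ν.rowLen i := by
  by_contra hne
  rcases Nat.lt_or_ge (μ.rowLen i) (ν.rowLen i) with hlt | hge
  · exact absurd (YoungDiagram.mem_iff_lt_rowLen.mp
      ((h _).mpr (YoungDiagram.mem_iff_lt_rowLen.mpr hlt))) (by omega)
  · have hlt : ν.rowLen i < μ.rowLen i := by omega
    exact absurd (YoungDiagram.mem_iff_lt_rowLen.mp
      ((h _).mp (YoungDiagram.mem_iff_lt_rowLen.mpr hlt))) (by omega)

/-- Row `i` is addable: either `i = 0` or row `i` is strictly shorter than row `i-1`. -/
def Addable (μ : YoungDiagram) (i : ℕ) : Prop := ∀ k, i = k + 1 → μ.rowLen i < μ.rowLen k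

lemma addable_zero (μ : YoungDiagram) : Addable μ 0 := fun _ h => absurd h (by omega)

lemma addable_succ_iff {μ : YoungDiagram} {i : ℕ} :
    Addable μ (i + 1) ↔ μ.rowLen (i + 1) < μ.rowLen i := by
  constructor
  · exact fun h => h i rfl
  · intro h k hk
    obtain rfl : k = i := by omega
    exact h

def addCells (μ : YoungDiagram) (i : ℕ) : Finset (ℕ × ℕ) := insert (i, μ.rowLen i) μ.cells

lemma corner_not_mem (μ : YoungDiagram) (i : ℕ) : (i, μ.rowLen i) ∉ μ := by
  simp [YoungDiagram.mem_iff_lt_rowLen]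

lemma addCells_isLowerSet {μ : YoungDiagram} {i : ℕ} (h : Addable μ i) :
    IsLowerSet (addCells μ i : Set (ℕ × ℕ)) := by
  rintro ⟨x, y⟩ ⟨a, b⟩ hle hmem
  simp only [addCells, Finset.coe_insert, Set.mem_insert_iff, Finset.mem_coe,
    YoungDiagram.mem_cells, Prod.mk.injEq] at hmem ⊢
  obtain ⟨hax, hby⟩ : a ≤ x ∧ b ≤ y := ⟨hle.1, hle.2⟩
  rcases hmem with ⟨hxi, hyR⟩ | hμ
  · rw [hxi] at hax
    rw [hyR] at hby
    by_cases hb : b < μ.rowLen i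
    · exact Or.inr (μ.up_left_mem hax le_rfl (YoungDiagram.mem_iff_lt_rowLen.mpr hb))
    · have hbe : b = μ.rowLen i := by omega
      subst hbe
      by_cases hai : a = i
      · exact Or.inl ⟨hai, rfl⟩
      · have hai' : a < i := by omega
        have hi1 : i = (i - 1) + 1 := by omega
        have hr : μ.rowLen i < μ.rowLen (i - 1) := h (i - 1) hi1
        have : (i - 1, μ.rowLen i) ∈ μ := YoungDiagram.mem_iff_lt_rowLen.mpr hr
        exact Or.inr (μ.up_left_mem (by omega) le_rfl this)
  · exact Or.inr (μ.up_left_mem hax hby hμ)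

noncomputable def addRow (μ : YoungDiagram) (i : ℕ) (h : Addable μ i) : YoungDiagram :=
  ⟨addCells μ i, addCells_isLowerSet h⟩

lemma mem_addRow {μ : YoungDiagram} {i : ℕ} {h : Addable μ i} {c : ℕ × ℕ} :
    c ∈ addRow μ i h ↔ c = (i, μ.rowLen i) ∨ c ∈ μ := by
  show c ∈ addCells μ i ↔ _
  simp [addCells]

lemma addRow_card {μ : YoungDiagram} {i : ℕ} (h : Addable μ i) :
    (addRow μ i h).card = μ.card + 1 := by
  show (addCells μ i).card = _
  rw [addCells, Finset.card_insert_of_notMem (by simpa using corner_not_mem μ i)]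

lemma addBox_addRow {μ : YoungDiagram} {i : ℕ} (h : Addable μ i) : AddBox μ (addRow μ i h) := by
  constructor
  · rw [← YoungDiagram.cells_subset_iff]
    exact Finset.subset_insert _ _
  · exact addRow_card h

lemma exists_addRow_of_addBox {μ ν : YoungDiagram} (h : AddBox μ ν) :
    ∃ i, ∃ hi : Addable μ i, ν = addRow μ i hi := by
  obtain ⟨hle, hcard⟩ := h
  have hsub : μ.cells ⊆ ν.cells := YoungDiagram.cells_subset_iff.mpr hle
  have hdiff : (ν.cells \ μ.cells).card = 1 := by
    rw [Finset.card_sdiff_of_subset hsub]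
    show ν.cells.card - μ.cells.card = 1
    have e1 : ν.cells.card = ν.card := rfl
    have e2 : μ.cells.card = μ.card := rfl
    omega
  obtain ⟨c, hc⟩ := Finset.card_eq_one.mp hdiff
  obtain ⟨i, j⟩ := c
  have hcm : (i, j) ∈ ν.cells ∧ (i, j) ∉ μ.cells := by
    have : (i, j) ∈ ν.cells \ μ.cells := hc ▸ Finset.mem_singleton_self _
    exact ⟨(Finset.mem_sdiff.mp this).1, (Finset.mem_sdiff.mp this).2⟩
  have hcells : ν.cells = insert (i, j) μ.cells := by
    apply Finset.Subset.antisymm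
    · intro x hx
      by_cases hxμ : x ∈ μ.cells
      · exact Finset.mem_insert_of_mem hxμ
      · have : x ∈ ν.cells \ μ.cells := Finset.mem_sdiff.mpr ⟨hx, hxμ⟩
        rw [hc, Finset.mem_singleton] at this
        exact this ▸ Finset.mem_insert_self _ _
    · exact Finset.insert_subset hcm.1 hsub
  have hmemν : ∀ x, x ∈ ν ↔ x = (i, j) ∨ x ∈ μ := by
    intro x
    rw [← YoungDiagram.mem_cells, hcells]
    simp
  have hjr : μ.rowLen i ≤ j := by
    have : ¬ (j < μ.rowLen i) := fun hh =>
      hcm.2 (by simpa using YoungDiagram.mem_iff_lt_rowLen.mpr hh)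
    omega
  have hcν : (i, j) ∈ ν := by simpa using hcm.1
  have hj : j = μ.rowLen i := by
    by_contra hne
    have hjpos : 1 ≤ j := by omega
    have h1 : (i, j - 1) ∈ ν := ν.up_left_mem le_rfl (by omega) hcν
    have h2 : (i, j - 1) ∈ μ := by
      rcases (hmemν _).mp h1 with he | hμ
      · rw [Prod.mk.injEq] at he
        omega
      · exact hμ
    have := YoungDiagram.mem_iff_lt_rowLen.mp h2
    omega
  subst hj
  have hadd : Addable μ i := by
    intro k hk
    have h1 : (k, μ.rowLen i) ∈ ν := ν.up_left_mem (by omega) le_rfl hcν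
    have h2 : (k, μ.rowLen i) ∈ μ := by
      rcases (hmemν _).mp h1 with he | hμ
      · rw [Prod.mk.injEq] at he
        omega
      · exact hμ
    exact YoungDiagram.mem_iff_lt_rowLen.mp h2
  refine ⟨i, hadd, YoungDiagram.ext ?_⟩
  rw [hcells]; rfl

lemma addBox_iff {μ ν : YoungDiagram} :
    AddBox μ ν ↔ ∃ i, ∃ hi : Addable μ i, ν = addRow μ i hi := by
  constructor
  · exact exists_addRow_of_addBox
  · rintro ⟨i, hi, rfl⟩
    exact addBox_addRow hi

lemma addRow_inj {μ : YoungDiagram} {i i' : ℕ} {h : Addable μ i} {h' : Addable μ i'}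
    (e : addRow μ i h = addRow μ i' h') : i = i' := by
  have hm : (i, μ.rowLen i) ∈ addRow μ i' h' := by
    rw [← e, mem_addRow]; exact Or.inl rfl
  rcases mem_addRow.mp hm with he | hμ
  · exact congrArg Prod.fst he
  · exact absurd hμ (corner_not_mem μ i)

lemma addable_le {μ : YoungDiagram} {i : ℕ} (h : Addable μ i) : i ≤ μ.colLen 0 := by
  rcases Nat.eq_zero_or_pos i with rfl | hi
  · omega
  · have h1 : μ.rowLen i < μ.rowLen (i - 1) := h (i - 1) (by omega)
    have h2 : (i - 1, 0) ∈ μ := YoungDiagram.mem_iff_lt_rowLen.mpr (by omega)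
    have := YoungDiagram.mem_iff_lt_colLen.mp h2
    omega

/-- Row `i` is removable. -/
def Removable (μ : YoungDiagram) (i : ℕ) : Prop := μ.rowLen (i + 1) < μ.rowLen i

lemma removable_lt {μ : YoungDiagram} {i : ℕ} (h : Removable μ i) : i < μ.colLen 0 := by
  have h2 : (i, 0) ∈ μ := YoungDiagram.mem_iff_lt_rowLen.mpr (by unfold Removable at h; omega)
  exact YoungDiagram.mem_iff_lt_colLen.mp h2

def eraseCells (μ : YoungDiagram) (i : ℕ) : Finset (ℕ × ℕ) :=
  μ.cells.erase (i, μ.rowLen i - 1)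

lemma eraseCells_isLowerSet {μ : YoungDiagram} {i : ℕ} (h : Removable μ i) :
    IsLowerSet (eraseCells μ i : Set (ℕ × ℕ)) := by
  have hR : 1 ≤ μ.rowLen i := by unfold Removable at h; omega
  rintro ⟨x, y⟩ ⟨a, b⟩ hle hmem
  obtain ⟨hax, hby⟩ : a ≤ x ∧ b ≤ y := ⟨hle.1, hle.2⟩
  simp only [eraseCells, Finset.coe_erase, Set.mem_diff, Finset.mem_coe,
    YoungDiagram.mem_cells, Set.mem_singleton_iff, Prod.mk.injEq] at hmem ⊢
  obtain ⟨hxy, hne⟩ := hmem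
  refine ⟨μ.up_left_mem hax hby hxy, ?_⟩
  rintro ⟨hai, hbr⟩
  rw [hai] at hax
  rw [hbr] at hby
  have hy : y < μ.rowLen x := YoungDiagram.mem_iff_lt_rowLen.mp hxy
  have hxx : x = i := by
    by_contra hxi
    have hx1 : i + 1 ≤ x := by omega
    have := μ.rowLen_anti (i + 1) x hx1
    unfold Removable at h
    omega
  have hyy : y = μ.rowLen i - 1 := by rw [hxx] at hy; omega
  exact hne ⟨hxx, hyy⟩

noncomputable def eraseRow (μ : YoungDiagram) (i : ℕ) (h : Removable μ i) : YoungDiagram :=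
  ⟨eraseCells μ i, eraseCells_isLowerSet h⟩

lemma addBox_eraseRow {μ : YoungDiagram} {i : ℕ} (h : Removable μ i) :
    AddBox (eraseRow μ i h) μ := by
  have hR : 1 ≤ μ.rowLen i := by unfold Removable at h; omega
  have hmem : (i, μ.rowLen i - 1) ∈ μ.cells := by
    simpa using YoungDiagram.mem_iff_lt_rowLen.mpr (show μ.rowLen i - 1 < μ.rowLen i by omega)
  constructor
  · rw [← YoungDiagram.cells_subset_iff]
    exact Finset.erase_subset _ _
  · show μ.card = (eraseCells μ i).card + 1
    rw [eraseCells, Finset.card_erase_of_mem hmem]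
    have h1 : 1 ≤ μ.cells.card := Finset.card_pos.mpr ⟨_, hmem⟩
    show μ.cells.card = _
    omega

lemma exists_eraseRow_of_addBox {α μ : YoungDiagram} (h : AddBox α μ) :
    ∃ i, ∃ hi : Removable μ i, α = eraseRow μ i hi := by
  obtain ⟨i, hi, rfl⟩ := exists_addRow_of_addBox h
  have hcorner : (i, α.rowLen i) ∈ addRow α i hi := mem_addRow.mpr (Or.inl rfl)
  have hrow : (addRow α i hi).rowLen i = α.rowLen i + 1 := by
    apply rowLen_eq_succ hcorner
    rw [mem_addRow]
    push_neg
    constructor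
    · simp
    · exact fun hm => absurd (YoungDiagram.mem_iff_lt_rowLen.mp hm) (by omega)
  have hrow1 : (addRow α i hi).rowLen (i + 1) = α.rowLen (i + 1) := by
    apply rowLen_congr
    intro j
    rw [mem_addRow]
    simp only [Prod.mk.injEq]
    constructor
    · rintro (⟨he, _⟩ | hm)
      · omega
      · exact hm
    · exact fun hm => Or.inr hm
  have hrem : Removable (addRow α i hi) i := by
    unfold Removable
    rw [hrow, hrow1]
    have := α.rowLen_anti i (i + 1) (by omega)
    omega
  refine ⟨i, hrem, YoungDiagram.ext ?_⟩
  show α.cells = eraseCells (addRow α i hi) i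
  rw [eraseCells, hrow]
  simp only [Nat.add_sub_cancel]
  show α.cells = (insert (i, α.rowLen i) α.cells).erase (i, α.rowLen i)
  rw [Finset.erase_insert (by simpa using corner_not_mem α i)]

lemma eraseRow_inj {μ : YoungDiagram} {i i' : ℕ} {h : Removable μ i} {h' : Removable μ i'}
    (e : eraseRow μ i h = eraseRow μ i' h') : i = i' := by
  by_contra hne
  have hR : 1 ≤ μ.rowLen i := by unfold Removable at h; omega
  have hmem : (i, μ.rowLen i - 1) ∈ μ.cells := by
    simpa using YoungDiagram.mem_iff_lt_rowLen.mpr (show μ.rowLen i - 1 < μ.rowLen i by omega)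
  have h1 : (i, μ.rowLen i - 1) ∉ (eraseRow μ i h).cells := by
    show (i, μ.rowLen i - 1) ∉ (eraseCells μ i)
    simp [eraseCells]
  have h2 : (i, μ.rowLen i - 1) ∈ (eraseRow μ i' h').cells := by
    show (i, μ.rowLen i - 1) ∈ (eraseCells μ i')
    rw [eraseCells, Finset.mem_erase]
    exact ⟨by simp [Prod.ext_iff]; omega, hmem⟩
  rw [e] at h1
  exact h1 h2

/-- The finset of upper covers of `μ`. -/
noncomputable def UC (μ : YoungDiagram) : Finset YoungDiagram :=
  (((Finset.range (μ.colLen 0 + 1)).filter (Addable μ)).attach).image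
    (fun i => addRow μ i.1 (Finset.mem_filter.mp i.2).2)

lemma mem_UC {μ ν : YoungDiagram} : ν ∈ UC μ ↔ AddBox μ ν := by
  rw [UC, Finset.mem_image]
  constructor
  · rintro ⟨i, _, rfl⟩
    exact addBox_addRow _
  · intro h
    obtain ⟨i, hi, rfl⟩ := exists_addRow_of_addBox h
    have hmem : i ∈ (Finset.range (μ.colLen 0 + 1)).filter (Addable μ) := by
      rw [Finset.mem_filter, Finset.mem_range]
      exact ⟨by have := addable_le hi; omega, hi⟩
    exact ⟨⟨i, hmem⟩, Finset.mem_attach _ _, rfl⟩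

/-- The finset of lower covers of `μ`. -/
noncomputable def LC (μ : YoungDiagram) : Finset YoungDiagram :=
  (((Finset.range (μ.colLen 0)).filter (Removable μ)).attach).image
    (fun i => eraseRow μ i.1 (Finset.mem_filter.mp i.2).2)

lemma mem_LC {μ α : YoungDiagram} : α ∈ LC μ ↔ AddBox α μ := by
  rw [LC, Finset.mem_image]
  constructor
  · rintro ⟨i, _, rfl⟩
    exact addBox_eraseRow _
  · intro h
    obtain ⟨i, hi, rfl⟩ := exists_eraseRow_of_addBox h
    have hmem : i ∈ (Finset.range (μ.colLen 0)).filter (Removable μ) := by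
      rw [Finset.mem_filter, Finset.mem_range]
      exact ⟨removable_lt hi, hi⟩
    exact ⟨⟨i, hmem⟩, Finset.mem_attach _ _, rfl⟩

lemma card_UC (μ : YoungDiagram) :
    (UC μ).card = ((Finset.range (μ.colLen 0 + 1)).filter (Addable μ)).card := by
  rw [UC, Finset.card_image_of_injective _ (fun a b hab => Subtype.ext (addRow_inj hab)),
    Finset.card_attach]

lemma card_LC (μ : YoungDiagram) :
    (LC μ).card = ((Finset.range (μ.colLen 0)).filter (Removable μ)).card := by
  rw [LC, Finset.card_image_of_injective _ (fun a b hab => Subtype.ext (eraseRow_inj hab)),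
    Finset.card_attach]

lemma card_UC_eq (μ : YoungDiagram) : (UC μ).card = (LC μ).card + 1 := by
  rw [card_UC, card_LC]
  have hset : (Finset.range (μ.colLen 0 + 1)).filter (Addable μ) =
      insert 0 (((Finset.range (μ.colLen 0)).filter (Removable μ)).image (· + 1)) := by
    ext x
    rw [Finset.mem_filter, Finset.mem_range, Finset.mem_insert, Finset.mem_image]
    cases x with
    | zero => simp [addable_zero]
    | succ i =>
      simp only [Nat.succ_ne_zero, false_or]
      constructor
      · rintro ⟨hlt, hadd⟩
        exact ⟨i, Finset.mem_filter.mpr ⟨Finset.mem_range.mpr (by omega),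
          addable_succ_iff.mp hadd⟩, rfl⟩
      · rintro ⟨a, ha, he⟩
        obtain rfl : a = i := by omega
        rw [Finset.mem_filter, Finset.mem_range] at ha
        exact ⟨by omega, addable_succ_iff.mpr ha.2⟩
  rw [hset, Finset.card_insert_of_notMem (by simp), Finset.card_image_of_injective _
    (fun a b hab => by omega)]

lemma nBox_eq (μ : YoungDiagram) : nBox μ = (LC μ).card := by
  rw [nBox, Nat.card_congr (Equiv.subtypeEquivRight (fun α => mem_LC.symm)),
    Nat.card_eq_fintype_card, Fintype.card_coe]

lemma card_sup_add_card_inf (μ ν : YoungDiagram) :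
    (μ ⊔ ν).card + (μ ⊓ ν).card = μ.card + ν.card := by
  show ((μ ⊔ ν).cells).card + ((μ ⊓ ν).cells).card = _
  rw [YoungDiagram.cells_sup, YoungDiagram.cells_inf]
  exact Finset.card_union_add_card_inter μ.cells ν.cells

lemma eq_of_le_of_card_eq {α β : YoungDiagram} (h : α ≤ β) (hc : α.card = β.card) : α = β :=
  eq_of_le_of_card_le h (le_of_eq hc.symm)

lemma diamond_down {μ β ν : YoungDiagram} (h1 : AddBox μ ν) (h2 : AddBox β ν) (hne : β ≠ μ) :
    AddBox (μ ⊓ β) μ ∧ AddBox (μ ⊓ β) β ∧ μ ⊔ β = ν := by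
  obtain ⟨hμν, hcard1⟩ := h1
  obtain ⟨hβν, hcard2⟩ := h2
  have hβμ : β.card = μ.card := by omega
  have hsuple : μ ⊔ β ≤ ν := sup_le hμν hβν
  have hsle : (μ ⊔ β).card ≤ ν.card := card_le_of_le hsuple
  have hmono : μ.card ≤ (μ ⊔ β).card := card_le_of_le le_sup_left
  have hne2 : (μ ⊔ β).card ≠ μ.card := by
    intro hc
    have hsup : μ = μ ⊔ β := eq_of_le_of_card_eq le_sup_left hc.symm
    have hβle : β ≤ μ := le_of_le_of_eq le_sup_right hsup.symm
    exact hne (eq_of_le_of_card_eq hβle hβμ)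
  have hcards := card_sup_add_card_inf μ β
  have hsupcard : (μ ⊔ β).card = ν.card := by omega
  have hsupeq : μ ⊔ β = ν := eq_of_le_of_card_eq hsuple hsupcard
  exact ⟨⟨inf_le_left, by omega⟩, ⟨inf_le_right, by omega⟩, hsupeq⟩

lemma diamond_up {γ μ β : YoungDiagram} (h1 : AddBox γ μ) (h2 : AddBox γ β) (hne : β ≠ μ) :
    AddBox μ (μ ⊔ β) ∧ AddBox β (μ ⊔ β) ∧ μ ⊓ β = γ := by
  obtain ⟨hγμ, hcard1⟩ := h1
  obtain ⟨hγβ, hcard2⟩ := h2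
  have hγinf : γ ≤ μ ⊓ β := le_inf hγμ hγβ
  have hinfγ : γ.card ≤ (μ ⊓ β).card := card_le_of_le hγinf
  have hinfμ : (μ ⊓ β).card ≤ μ.card := card_le_of_le inf_le_left
  have hcards := card_sup_add_card_inf μ β
  have hne2 : (μ ⊓ β).card ≠ μ.card := by
    intro hc
    have hinf : μ ⊓ β = μ := eq_of_le_of_card_eq inf_le_left hc
    have hμβ : μ ≤ β := by rw [← hinf]; exact inf_le_right
    exact hne (eq_of_le_of_card_eq hμβ (by omega)).symm
  have hinfcard : (μ ⊓ β).card = γ.card := by omega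
  have hγeq : μ ⊓ β = γ := (eq_of_le_of_card_eq hγinf hinfcard.symm).symm
  exact ⟨⟨le_sup_left, by omega⟩, ⟨le_sup_right, by omega⟩, hγeq⟩

lemma colLen_zero_le_card (μ : YoungDiagram) : μ.colLen 0 ≤ μ.card := by
  rw [YoungDiagram.colLen_eq_card]
  apply Finset.card_le_card
  intro c hc
  rw [YoungDiagram.mem_col_iff] at hc
  simpa using hc.1

lemma bot_of_card_zero {μ : YoungDiagram} (h : μ.card = 0) : μ = ⊥ := by
  apply YoungDiagram.ext
  rw [YoungDiagram.cells_bot]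
  exact Finset.card_eq_zero.mp h

lemma LC_nonempty {μ : YoungDiagram} (h : 1 ≤ μ.card) : (LC μ).Nonempty := by
  have hc : μ.cells.Nonempty := Finset.card_pos.mp h
  obtain ⟨⟨a, b⟩, hab⟩ := hc
  have h00 : (0, 0) ∈ μ := μ.up_left_mem (Nat.zero_le _) (Nat.zero_le _) (by simpa using hab)
  have hcol : 1 ≤ μ.colLen 0 := YoungDiagram.mem_iff_lt_colLen.mp h00
  set i := μ.colLen 0 - 1 with hi
  have h1 : (i, 0) ∈ μ := YoungDiagram.mem_iff_lt_colLen.mpr (by omega)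
  have h2 : (i + 1, 0) ∉ μ := fun hm => by
    have := YoungDiagram.mem_iff_lt_colLen.mp hm
    omega
  have hrem : Removable μ i := by
    unfold Removable
    rw [rowLen_eq_zero h2]
    exact YoungDiagram.mem_iff_lt_rowLen.mp h1
  exact ⟨eraseRow μ i hrem, mem_LC.mpr (addBox_eraseRow hrem)⟩

section F

variable {f : YoungDiagram → ℝ}

lemma fpos (h0 : ∀ γ : YoungDiagram, γ.card = 0 → f γ = 1)
    (hrec : ∀ γ : YoungDiagram, 1 ≤ γ.card → f γ = ∑ β ∈ LC γ, f β) :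
    ∀ n (μ : YoungDiagram), μ.card = n → 0 < f μ := by
  intro n
  induction n using Nat.strong_induction_on with
  | _ n IH =>
    intro μ hμ
    rcases Nat.eq_zero_or_pos n with rfl | hn
    · rw [h0 μ hμ]; norm_num
    · rw [hrec μ (by omega)]
      apply Finset.sum_pos
      · intro β hβ
        have hb := mem_LC.mp hβ
        exact IH (n - 1) (by omega) β (by have := hb.2; omega)
      · exact LC_nonempty (by omega)

lemma upward (h0 : ∀ γ : YoungDiagram, γ.card = 0 → f γ = 1)
    (hrec : ∀ γ : YoungDiagram, 1 ≤ γ.card → f γ = ∑ β ∈ LC γ, f β) :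
    ∀ n (μ : YoungDiagram), μ.card = n → ∑ ν ∈ UC μ, f ν = ((n : ℝ) + 1) * f μ := by
  intro n
  induction n using Nat.strong_induction_on with
  | _ n IH =>
    intro μ hμ
    rcases Nat.eq_zero_or_pos n with rfl | hn
    · have hLCμ : LC μ = ∅ := by
        rw [Finset.eq_empty_iff_forall_notMem]
        intro β hβ
        have hb := mem_LC.mp hβ
        have := hb.2
        omega
      have hone : (UC μ).card = 1 := by rw [card_UC_eq, hLCμ]; simp
      have hf1 : ∀ ν ∈ UC μ, f ν = 1 := by
        intro ν hν
        have hb := mem_UC.mp hν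
        have hν1 : ν.card = 1 := by rw [hb.2, hμ]
        rw [hrec ν (by omega)]
        have hbot : (⊥ : YoungDiagram) ∈ LC ν := by
          apply mem_LC.mpr
          refine ⟨bot_le, ?_⟩
          rw [hν1]
          show 1 = (⊥ : YoungDiagram).cells.card + 1
          rw [YoungDiagram.cells_bot]
          rfl
        have hLC : LC ν = {⊥} := by
          apply Finset.eq_singleton_iff_unique_mem.mpr
          refine ⟨hbot, fun β hβ => ?_⟩
          have hb' := mem_LC.mp hβ
          exact bot_of_card_zero (by have := hb'.2; omega)
        rw [hLC, Finset.sum_singleton]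
        apply h0
        show (⊥ : YoungDiagram).cells.card = 0
        rw [YoungDiagram.cells_bot]
        rfl
      rw [Finset.sum_congr rfl hf1, Finset.sum_const, hone, h0 μ hμ]
      norm_num
    · have key : ∀ ν ∈ UC μ, f ν = f μ + ∑ β ∈ (LC ν).erase μ, f β := by
        intro ν hν
        have hb := mem_UC.mp hν
        rw [hrec ν (by have := hb.2; omega),
          ← Finset.add_sum_erase _ f (mem_LC.mpr hb)]
      rw [Finset.sum_congr rfl key, Finset.sum_add_distrib, Finset.sum_const, card_UC_eq]
      have hS : ∑ ν ∈ UC μ, ∑ β ∈ (LC ν).erase μ, f β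
          = ∑ γ ∈ LC μ, ∑ β ∈ (UC γ).erase μ, f β := by
        rw [Finset.sum_sigma', Finset.sum_sigma']
        refine Finset.sum_bij'
          (fun x _ => (⟨μ ⊓ x.2, x.2⟩ : Σ _ : YoungDiagram, YoungDiagram))
          (fun x _ => (⟨μ ⊔ x.2, x.2⟩ : Σ _ : YoungDiagram, YoungDiagram))
          ?_ ?_ ?_ ?_ ?_
        · rintro ⟨ν, β⟩ hx
          rw [Finset.mem_sigma] at hx
          obtain ⟨hν, hβ⟩ := hx
          rw [Finset.mem_erase] at hβ
          obtain ⟨hbne, hβν⟩ := hβ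
          have hd := diamond_down (mem_UC.mp hν) (mem_LC.mp hβν) hbne
          rw [Finset.mem_sigma, Finset.mem_erase]
          exact ⟨mem_LC.mpr hd.1, hbne, mem_UC.mpr hd.2.1⟩
        · rintro ⟨γ, β⟩ hx
          rw [Finset.mem_sigma] at hx
          obtain ⟨hγ, hβ⟩ := hx
          rw [Finset.mem_erase] at hβ
          obtain ⟨hbne, hβγ⟩ := hβ
          have hd := diamond_up (mem_LC.mp hγ) (mem_UC.mp hβγ) hbne
          rw [Finset.mem_sigma, Finset.mem_erase]
          exact ⟨mem_UC.mpr hd.1, hbne, mem_LC.mpr hd.2.1⟩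
        · rintro ⟨ν, β⟩ hx
          rw [Finset.mem_sigma] at hx
          obtain ⟨hν, hβ⟩ := hx
          rw [Finset.mem_erase] at hβ
          have hd := diamond_down (mem_UC.mp hν) (mem_LC.mp hβ.2) hβ.1
          show (⟨μ ⊔ β, β⟩ : Σ _ : YoungDiagram, YoungDiagram) = ⟨ν, β⟩
          rw [hd.2.2]
        · rintro ⟨γ, β⟩ hx
          rw [Finset.mem_sigma] at hx
          obtain ⟨hγ, hβ⟩ := hx
          rw [Finset.mem_erase] at hβ
          have hd := diamond_up (mem_LC.mp hγ) (mem_UC.mp hβ.2) hβ.1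
          show (⟨μ ⊓ β, β⟩ : Σ _ : YoungDiagram, YoungDiagram) = ⟨γ, β⟩
          rw [hd.2.2]
        · intros
          rfl
      rw [hS]
      have hIH : ∀ γ ∈ LC μ, ∑ β ∈ (UC γ).erase μ, f β = (n : ℝ) * f γ - f μ := by
        intro γ hγ
        have hb := mem_LC.mp hγ
        have hμUC : μ ∈ UC γ := mem_UC.mpr hb
        rw [Finset.sum_erase_eq_sub hμUC, IH (n - 1) (by omega) γ (by have := hb.2; omega)]
        have hcast : ((n - 1 : ℕ) : ℝ) + 1 = (n : ℝ) := by
          rw [Nat.cast_sub (by omega)]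
          norm_num
        rw [hcast]
      rw [Finset.sum_congr rfl hIH, Finset.sum_sub_distrib, ← Finset.mul_sum,
        ← hrec μ (by omega), Finset.sum_const]
      simp only [nsmul_eq_mul]
      push_cast
      ring

end F

end TeleAux



/-- Let `f` be the function on Young diagrams with `f(∅) = 1` and, for every nonempty diagram
`γ`, `f(γ) = ∑ f(β)`, the sum over all `β` obtained from `γ` by removing a box (so `f γ` is the
number of standard Young tableaux of shape `γ`).  Then for every `N ≥ 2` the vector
`(f μ)_{μ ⊢ N}` has strictly positive entries and is an eigenvector of `M_F(N)` with
eigenvalue `N`: for every `μ ⊢ N`, `∑_{ν ⊢ N} (M_F(N))_{μν} f(ν) = N f(μ)`. -/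
theorem dimension_vector_eigenvector_MF (f : YoungDiagram → ℝ)
    (h0 : ∀ γ : YoungDiagram, γ.card = 0 → f γ = 1)
    (hrec : ∀ γ : YoungDiagram, 1 ≤ γ.card →
      f γ = ∑ᶠ (β : YoungDiagram) (_ : AddBox β γ), f β)
    (N : ℕ) (hN : 2 ≤ N) :
    (∀ ν : PartLE N N, 0 < f ν.1) ∧
      ∀ μ : PartLE N N, ∑ ν : PartLE N N, MF N N μ ν * f ν.1 = N * f μ.1 := by
  classical
  have hrec' : ∀ γ : YoungDiagram, 1 ≤ γ.card → f γ = ∑ β ∈ TeleAux.LC γ, f β := by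
    intro γ hγ
    rw [hrec γ hγ]
    exact finsum_cond_eq_sum_of_cond_iff f (fun {x} _ => TeleAux.mem_LC.symm)
  constructor
  · intro ν
    exact TeleAux.fpos h0 hrec' ν.1.card ν.1 rfl
  · intro μ
    have hcard : μ.1.card = N := μ.2.1
    have step1 : ∀ ν : PartLE N N, MF N N μ ν * f ν.1 =
        (if μ = ν then (nBox ν.1 : ℝ) * f ν.1 else 0)
        + (if MoveBox μ.1 ν.1 then f ν.1 else 0) := by
      intro ν
      by_cases h : μ = ν
      · subst h
        have hmv : ¬ MoveBox μ.1 μ.1 := fun hm => hm.1 rfl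
        simp [MF, hmv]
      · by_cases h2 : MoveBox μ.1 ν.1 <;> simp [MF, h, h2]
    rw [Finset.sum_congr rfl (fun ν _ => step1 ν), Finset.sum_add_distrib]
    have e1 : (∑ ν : PartLE N N, if μ = ν then (nBox ν.1 : ℝ) * f ν.1 else 0)
        = (nBox μ.1 : ℝ) * f μ.1 := by
      rw [Finset.sum_ite_eq]
      simp
    have e2 : (∑ ν : PartLE N N, if MoveBox μ.1 ν.1 then f ν.1 else 0)
        = ∑ γ ∈ TeleAux.LC μ.1, ∑ β ∈ (TeleAux.UC γ).erase μ.1, f β := by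
      rw [← Finset.sum_filter, Finset.sum_sigma']
      refine Finset.sum_bij'
        (fun (ν : PartLE N N) _ =>
          (⟨μ.1 ⊓ ν.1, ν.1⟩ : Σ _ : YoungDiagram, YoungDiagram))
        (fun x hx => (⟨x.2, by
          rw [Finset.mem_sigma] at hx
          have h1 := TeleAux.mem_LC.mp hx.1
          have h2 := TeleAux.mem_UC.mp (Finset.mem_erase.mp hx.2).2
          have hle := TeleAux.colLen_zero_le_card x.2
          have e1 := h1.2
          have e2 := h2.2
          exact ⟨by omega, by omega⟩⟩ : PartLE N N))
        ?_ ?_ ?_ ?_ ?_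
      · intro ν hν
        rw [Finset.mem_filter] at hν
        obtain ⟨-, hne, γ, hγμ, hγν⟩ := hν
        have hd := TeleAux.diamond_up hγμ hγν (Ne.symm hne)
        rw [Finset.mem_sigma, Finset.mem_erase]
        refine ⟨?_, Ne.symm hne, ?_⟩
        · show (μ.1 ⊓ ν.1) ∈ TeleAux.LC μ.1
          rw [hd.2.2]
          exact TeleAux.mem_LC.mpr hγμ
        · show (ν.1 : YoungDiagram) ∈ TeleAux.UC (μ.1 ⊓ ν.1)
          rw [hd.2.2]
          exact TeleAux.mem_UC.mpr hγν
      · intro x hx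
        rw [Finset.mem_filter]
        refine ⟨Finset.mem_univ _, ?_⟩
        rw [Finset.mem_sigma] at hx
        have h1 := TeleAux.mem_LC.mp hx.1
        have hne := (Finset.mem_erase.mp hx.2).1
        have h2 := TeleAux.mem_UC.mp (Finset.mem_erase.mp hx.2).2
        exact ⟨Ne.symm hne, x.1, h1, h2⟩
      · intro ν hν
        apply Subtype.ext
        rfl
      · rintro ⟨γ, β⟩ hx
        rw [Finset.mem_sigma] at hx
        have h1 := TeleAux.mem_LC.mp hx.1
        have hne := (Finset.mem_erase.mp hx.2).1
        have h2 := TeleAux.mem_UC.mp (Finset.mem_erase.mp hx.2).2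
        have hd := TeleAux.diamond_up h1 h2 hne
        show (⟨μ.1 ⊓ β, β⟩ : Σ _ : YoungDiagram, YoungDiagram) = ⟨γ, β⟩
        rw [hd.2.2]
      · intro ν hν
        rfl
    have e3 : ∀ γ ∈ TeleAux.LC μ.1, ∑ β ∈ (TeleAux.UC γ).erase μ.1, f β
        = (N : ℝ) * f γ - f μ.1 := by
      intro γ hγ
      have hb := TeleAux.mem_LC.mp hγ
      have hμUC : μ.1 ∈ TeleAux.UC γ := TeleAux.mem_UC.mpr hb
      rw [Finset.sum_erase_eq_sub hμUC, TeleAux.upward h0 hrec' γ.card γ rfl]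
      have hNγ : γ.card + 1 = N := by
        have := hb.2
        omega
      have hcast : ((γ.card : ℝ) + 1) = (N : ℝ) := by exact_mod_cast congrArg Nat.cast hNγ
      rw [hcast]
    rw [e1, e2, Finset.sum_congr rfl e3, Finset.sum_sub_distrib, ← Finset.mul_sum,
      ← hrec' μ.1 (by omega), Finset.sum_const, TeleAux.nBox_eq, nsmul_eq_mul]
    ring
end

section
/- For every N ≥ 2 and every d ≥ 1, the matrix M_F^d(N), viewed as a real symmetric matrix indexed by the partitions of N with at most d parts, is positive semidefinite. -/
open scoped Classical in
/-- Incidence matrix: rows indexed by partitions of `N-1`, columns by `PartLE N d`. -/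
noncomputable def AMat (N d : ℕ) : Matrix (PartLE (N-1) (N-1)) (PartLE N d) ℝ :=
  fun α μ => if AddBox α.1 μ.1 then 1 else 0

theorem colLen_le_card (μ : YoungDiagram) : μ.colLen 0 ≤ μ.card := by
  rw [YoungDiagram.colLen_eq_card]
  exact Finset.card_le_card (Finset.filter_subset _ _)

theorem addBox_cells_eq {α μ ν : YoungDiagram} (hcard : μ.card = ν.card) (hne : μ ≠ ν)
    (h1 : AddBox α μ) (h2 : AddBox α ν) : α.cells = μ.cells ∩ ν.cells := by
  obtain ⟨hαμ, hcμ⟩ := h1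
  obtain ⟨hαν, hcν⟩ := h2
  apply Finset.eq_of_subset_of_card_le
  · exact Finset.subset_inter (YoungDiagram.cells_subset_iff.mpr hαμ)
      (YoungDiagram.cells_subset_iff.mpr hαν)
  · have hsub : μ.cells ∩ ν.cells ⊆ μ.cells := Finset.inter_subset_left
    have hne' : μ.cells ∩ ν.cells ≠ μ.cells := by
      intro he
      have hsub2 : μ.cells ⊆ ν.cells := by
        rw [← he]; exact Finset.inter_subset_right
      exact hne (YoungDiagram.ext (Finset.eq_of_subset_of_card_le hsub2 (le_of_eq hcard.symm)))
    have hlt : (μ.cells ∩ ν.cells).card < μ.cells.card :=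
      Finset.card_lt_card (Finset.ssubset_iff_subset_ne.mpr ⟨hsub, hne'⟩)
    have h1 : μ.cells.card = μ.card := rfl
    have h2 : α.cells.card = α.card := rfl
    omega

theorem addBox_unique {α β μ ν : YoungDiagram} (hcard : μ.card = ν.card) (hne : μ ≠ ν)
    (h1 : AddBox α μ) (h2 : AddBox α ν) (h3 : AddBox β μ) (h4 : AddBox β ν) : α = β :=
  YoungDiagram.ext ((addBox_cells_eq hcard hne h1 h2).trans
    (addBox_cells_eq hcard hne h3 h4).symm)

theorem nBox_eq (N d : ℕ) (hN : 1 ≤ N) (μ : PartLE N d) :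
    nBox μ.1 = Nat.card {α : PartLE (N-1) (N-1) // AddBox α.1 μ.1} := by
  apply Nat.card_congr
  exact {
    toFun := fun x => ⟨⟨x.1, by
      have h := x.2.2
      have h1 := μ.2.1
      omega, le_trans (colLen_le_card x.1) (by have := x.2.2; have := μ.2.1; omega)⟩, x.2⟩
    invFun := fun x => ⟨x.1.1, x.2⟩
    left_inv := fun x => rfl
    right_inv := fun x => rfl }

/-- For every `N ≥ 2` and every `d ≥ 1`, the matrix `M_F^d(N)`, viewed as a real symmetric
matrix indexed by the partitions of `N` with at most `d` parts, is positive semidefinite. -/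
theorem MF_posSemidef (N d : ℕ) (hN : 2 ≤ N) (hd : 1 ≤ d) :
    (MF N d).PosSemidef := by
  have key : MF N d = (AMat N d).conjTranspose * AMat N d := by
    ext μ ν
    classical
    rw [Matrix.mul_apply]
    have hstep : ∀ α : PartLE (N-1) (N-1),
        (AMat N d).conjTranspose μ α * AMat N d α ν =
        if AddBox α.1 μ.1 ∧ AddBox α.1 ν.1 then (1:ℝ) else 0 := by
      intro α
      simp only [AMat, Matrix.conjTranspose_apply, starRingEnd_apply]
      split_ifs with h1 h2 h3 h3 <;> simp_all
    rw [Finset.sum_congr rfl (fun α _ => hstep α), Finset.sum_boole]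
    by_cases heq : μ = ν
    · subst heq
      simp only [MF, if_pos rfl, and_self]
      rw [nBox_eq N d (by omega) μ, Nat.card_eq_fintype_card, Fintype.card_subtype]
      simp
    · have hne1 : μ.1 ≠ ν.1 := fun e => heq (Subtype.ext e)
      have hcard : μ.1.card = ν.1.card := by rw [μ.2.1, ν.2.1]
      simp only [MF, if_neg heq]
      by_cases hmv : MoveBox μ.1 ν.1
      · rw [if_pos hmv]
        obtain ⟨_, α₀, hα₀μ, hα₀ν⟩ := hmv
        have hα₀ : α₀.card = N - 1 ∧ α₀.colLen 0 ≤ N - 1 := by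
          have h := hα₀μ.2
          have h1 := μ.2.1
          exact ⟨by omega, le_trans (colLen_le_card α₀) (by omega)⟩
        have : (Finset.univ.filter
            (fun α : PartLE (N-1) (N-1) => AddBox α.1 μ.1 ∧ AddBox α.1 ν.1)) =
            {⟨α₀, hα₀⟩} := by
          ext β
          simp only [Finset.mem_filter, Finset.mem_univ, true_and, Finset.mem_singleton]
          constructor
          · rintro ⟨hβμ, hβν⟩
            exact Subtype.ext (addBox_unique hcard hne1 hβμ hβν hα₀μ hα₀ν)
          · rintro rfl
            exact ⟨hα₀μ, hα₀ν⟩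
        rw [this]
        simp
      · rw [if_neg hmv]
        have : (Finset.univ.filter
            (fun α : PartLE (N-1) (N-1) => AddBox α.1 μ.1 ∧ AddBox α.1 ν.1)) = ∅ := by
          ext β
          simp only [Finset.mem_filter, Finset.mem_univ, true_and, Finset.notMem_empty,
            iff_false]
          rintro ⟨hβμ, hβν⟩
          exact hmv ⟨hne1, β.1, hβμ, hβν⟩
        rw [this]
        simp
  rw [key]
  exact Matrix.posSemidef_conjTranspose_mul_self _
end

section
/- Fix N ≥ 2 and d ≥ 2. For all partitions α and β of N−1, each with at most d parts, the number of partitions μ of N with at most d parts such that μ is obtained from α by adding a single box and μ is obtained from β by adding a single box equals (M_F^d(N−1))_{αβ} + δ_{αβ}·[α has fewer than d parts], where δ_{αβ} is the Kronecker delta and the bracket equals 1 if the number of parts of α is strictly less than d and 0 otherwise. (In matrix form: R_N^d (R_N^d)^T = M_F^d(N−1) + J, where R_N^d is the 0/1 matrix with rows indexed by partitions of N−1 with at most d parts, columns by partitions of N with at most d parts, and entry 1 exactly when the column partition is obtained from the row partition by adding a box, and J is the diagonal 0/1 matrix supported on the rows α with fewer than d parts; in particular, for d ≥ N this gives R_N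 (R_N)^T = 1 + M_F(N−1).) -/
namespace GramAux

open YoungDiagram Finset

/-- Row `i` is an addable row of `α`. -/
def AddableRow (α : YoungDiagram) (i : ℕ) : Prop :=
  i = 0 ∨ α.rowLen i < α.rowLen (i - 1)

/-- Row `i` is a removable row of `α`. -/
def RemovableRow (α : YoungDiagram) (i : ℕ) : Prop :=
  α.rowLen (i + 1) < α.rowLen i

theorem newCell_not_mem (α : YoungDiagram) (i : ℕ) : (i, α.rowLen i) ∉ α := by
  rw [YoungDiagram.mem_iff_lt_rowLen]; omega

/-- Adding a box in an addable row yields a Young diagram. -/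
def addCell (α : YoungDiagram) (i : ℕ) (hi : AddableRow α i) : YoungDiagram where
  cells := insert (i, α.rowLen i) α.cells
  isLowerSet := by
    rintro ⟨a, b⟩ ⟨a', b'⟩ ⟨(ha : a' ≤ a), (hb : b' ≤ b)⟩ hmem
    simp only [Finset.coe_insert, Set.mem_insert_iff, Finset.mem_coe, YoungDiagram.mem_cells] at *
    rcases hmem with h | h
    · obtain ⟨rfl, rfl⟩ := Prod.mk.injEq .. ▸ h
      rw [Prod.mk.injEq] at h
      rcases eq_or_lt_of_le ha with rfl | ha'
      · rcases eq_or_lt_of_le hb with rfl | hb'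
        · left; rfl
        · right; rw [YoungDiagram.mem_iff_lt_rowLen]; omega
      · right
        rcases hi with rfl | hi
        · omega
        · rw [YoungDiagram.mem_iff_lt_rowLen]
          have : α.rowLen (a - 1) ≤ α.rowLen a' := α.rowLen_anti _ _ (by omega)
          omega
    · right
      exact α.up_left_mem ha hb h

theorem cells_addCell {α : YoungDiagram} {i : ℕ} {hi : AddableRow α i} :
    (addCell α i hi).cells = insert (i, α.rowLen i) α.cells := rfl

theorem mem_addCell {α : YoungDiagram} {i : ℕ} {hi : AddableRow α i} {c : ℕ × ℕ} :
    c ∈ addCell α i hi ↔ c = (i, α.rowLen i) ∨ c ∈ α := by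
  rw [← YoungDiagram.mem_cells, cells_addCell, Finset.mem_insert, YoungDiagram.mem_cells]

theorem addBox_addCell (α : YoungDiagram) (i : ℕ) (hi : AddableRow α i) :
    AddBox α (addCell α i hi) := by
  constructor
  · rw [← YoungDiagram.cells_subset_iff]
    exact Finset.subset_insert _ _
  · have h1 : (addCell α i hi).card = (insert (i, α.rowLen i) α.cells).card := rfl
    rw [h1, Finset.card_insert_of_notMem (by
      rw [YoungDiagram.mem_cells]; exact newCell_not_mem α i)]

theorem addBox_exists {α μ : YoungDiagram} (h : AddBox α μ) :
    ∃ i, ∃ hi : AddableRow α i, μ = addCell α i hi := by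
  obtain ⟨hle, hcard⟩ := h
  have hsub : α.cells ⊆ μ.cells := YoungDiagram.cells_subset_iff.mpr hle
  have hcard' : μ.cells.card = α.cells.card + 1 := hcard
  have hsd : (μ.cells \ α.cells).card = 1 := by
    rw [Finset.card_sdiff_of_subset hsub]; omega
  obtain ⟨c, hc⟩ := Finset.card_eq_one.mp hsd
  have hcells : μ.cells = insert c α.cells := by
    have h1 : α.cells ∪ (μ.cells \ α.cells) = μ.cells := Finset.union_sdiff_of_subset hsub
    rw [hc] at h1
    rw [← h1]; ext x; simp [or_comm]
  obtain ⟨i, j⟩ := c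
  have hcmem : (i, j) ∈ μ.cells ∧ (i, j) ∉ α.cells := by
    have : (i, j) ∈ μ.cells \ α.cells := by rw [hc]; exact Finset.mem_singleton_self _
    exact Finset.mem_sdiff.mp this
  have hjge : α.rowLen i ≤ j := by
    have := hcmem.2
    rw [YoungDiagram.mem_cells, YoungDiagram.mem_iff_lt_rowLen] at this
    omega
  have hmemμ : (i, j) ∈ μ := by rw [← YoungDiagram.mem_cells]; exact hcmem.1
  have hjle : j ≤ α.rowLen i := by
    by_contra hlt
    push_neg at hlt
    have hj1 : (i, j - 1) ∈ μ := μ.up_left_mem le_rfl (by omega) hmemμ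
    rw [← YoungDiagram.mem_cells, hcells, Finset.mem_insert] at hj1
    rcases hj1 with h' | h'
    · rw [Prod.mk.injEq] at h'; omega
    · rw [YoungDiagram.mem_cells, YoungDiagram.mem_iff_lt_rowLen] at h'; omega
  have hj : j = α.rowLen i := le_antisymm hjle hjge
  subst hj
  have hrow : AddableRow α i := by
    rcases Nat.eq_zero_or_pos i with rfl | hpos
    · left; rfl
    · right
      have h1 : (i - 1, α.rowLen i) ∈ μ := μ.up_left_mem (by omega) le_rfl hmemμ
      rw [← YoungDiagram.mem_cells, hcells, Finset.mem_insert] at h1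
      rcases h1 with h' | h'
      · rw [Prod.mk.injEq] at h'; omega
      · rw [YoungDiagram.mem_cells, YoungDiagram.mem_iff_lt_rowLen] at h'; exact h'
  exact ⟨i, hrow, YoungDiagram.ext (by rw [hcells]; rfl)⟩

theorem addCell_injective {α : YoungDiagram} {i i' : ℕ} {hi : AddableRow α i}
    {hi' : AddableRow α i'} (h : addCell α i hi = addCell α i' hi') : i = i' := by
  by_contra hne
  have h1 : (i, α.rowLen i) ∈ addCell α i hi := mem_addCell.mpr (Or.inl rfl)
  rw [h, mem_addCell] at h1
  rcases h1 with h' | h'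
  · rw [Prod.mk.injEq] at h'; exact hne h'.1
  · exact newCell_not_mem α i h'

theorem rowLen_pos_of_removable {α : YoungDiagram} {i : ℕ} (hi : RemovableRow α i) :
    0 < α.rowLen i := by
  unfold RemovableRow at hi; omega

/-- Removing the last box of a removable row yields a Young diagram. -/
def delCell (α : YoungDiagram) (i : ℕ) (hi : RemovableRow α i) : YoungDiagram where
  cells := α.cells.erase (i, α.rowLen i - 1)
  isLowerSet := by
    rintro ⟨a, b⟩ ⟨a', b'⟩ ⟨(ha : a' ≤ a), (hb : b' ≤ b)⟩ hmem
    simp only [Finset.coe_erase, Set.mem_diff, Finset.mem_coe, YoungDiagram.mem_cells,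
      Set.mem_singleton_iff] at *
    obtain ⟨hab, hne⟩ := hmem
    have hab' : (a', b') ∈ α := α.up_left_mem ha hb hab
    refine ⟨hab', ?_⟩
    rintro h
    obtain ⟨ha1, hb1⟩ : a' = i ∧ b' = α.rowLen i - 1 := by
      rw [Prod.mk.injEq] at h; exact h
    rw [ha1] at ha
    rw [hb1] at hb
    have hpos := rowLen_pos_of_removable hi
    have h1 : b < α.rowLen a := YoungDiagram.mem_iff_lt_rowLen.mp hab
    rcases Nat.lt_or_ge i a with ha' | ha2
    · have h2 : α.rowLen a ≤ α.rowLen (i + 1) := α.rowLen_anti _ _ (by omega)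
      unfold RemovableRow at hi
      omega
    · have hia : a = i := by omega
      rw [hia] at h1
      exact hne (by rw [Prod.mk.injEq]; exact ⟨hia, by omega⟩)

theorem cells_delCell {α : YoungDiagram} {i : ℕ} {hi : RemovableRow α i} :
    (delCell α i hi).cells = α.cells.erase (i, α.rowLen i - 1) := rfl

theorem lastCell_mem {α : YoungDiagram} {i : ℕ} (hi : RemovableRow α i) :
    (i, α.rowLen i - 1) ∈ α := by
  have := rowLen_pos_of_removable hi
  rw [YoungDiagram.mem_iff_lt_rowLen]; omega

theorem addBox_delCell (α : YoungDiagram) (i : ℕ) (hi : RemovableRow α i) :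
    AddBox (delCell α i hi) α := by
  constructor
  · rw [← YoungDiagram.cells_subset_iff, cells_delCell]
    exact Finset.erase_subset _ _
  · have h1 : (delCell α i hi).card = (α.cells.erase (i, α.rowLen i - 1)).card := rfl
    show α.card = _
    rw [h1, Finset.card_erase_of_mem (by rw [YoungDiagram.mem_cells]; exact lastCell_mem hi)]
    have : 0 < α.cells.card := Finset.card_pos.mpr ⟨_, by
      rw [YoungDiagram.mem_cells]; exact lastCell_mem hi⟩
    show α.cells.card = _
    omega

theorem rowLen_addCell {α : YoungDiagram} {i : ℕ} (hi : AddableRow α i) (a : ℕ) :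
    (addCell α i hi).rowLen a = if a = i then α.rowLen i + 1 else α.rowLen a := by
  have key : ∀ b, (a, b) ∈ addCell α i hi ↔ b < if a = i then α.rowLen i + 1 else α.rowLen a := by
    intro b
    rw [mem_addCell, Prod.mk.injEq]
    split_ifs with h
    · subst h
      rw [YoungDiagram.mem_iff_lt_rowLen]
      omega
    · rw [YoungDiagram.mem_iff_lt_rowLen]
      simp [h]
  have h1 := (key ((addCell α i hi).rowLen a)).mp
  have h2 := (key (if a = i then α.rowLen i + 1 else α.rowLen a - 1 + 0))
  -- determine rowLen by antisymmetry
  have hub : (addCell α i hi).rowLen a ≤ if a = i then α.rowLen i + 1 else α.rowLen a := by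
    by_contra hc
    push_neg at hc
    have : (a, if a = i then α.rowLen i + 1 else α.rowLen a) ∈ addCell α i hi := by
      rw [YoungDiagram.mem_iff_lt_rowLen]; exact hc
    rw [key] at this
    omega
  have hlb : (if a = i then α.rowLen i + 1 else α.rowLen a) ≤ (addCell α i hi).rowLen a := by
    rcases Nat.eq_zero_or_pos (if a = i then α.rowLen i + 1 else α.rowLen a) with h0 | hpos
    · omega
    · have : (a, (if a = i then α.rowLen i + 1 else α.rowLen a) - 1) ∈ addCell α i hi := by
        rw [key]; omega
      rw [YoungDiagram.mem_iff_lt_rowLen] at this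
      omega
  omega

theorem addBox_to_delCell {γ α : YoungDiagram} (h : AddBox γ α) :
    ∃ i, ∃ hi : RemovableRow α i, γ = delCell α i hi := by
  obtain ⟨i, hi, rfl⟩ := addBox_exists h
  have hrm : RemovableRow (addCell γ i hi) i := by
    unfold RemovableRow
    rw [rowLen_addCell hi (i + 1), rowLen_addCell hi i]
    have := γ.rowLen_anti i (i + 1) (by omega)
    rw [if_neg (by omega : ¬ i + 1 = i), if_pos rfl]
    omega
  refine ⟨i, hrm, YoungDiagram.ext ?_⟩
  rw [cells_delCell, cells_addCell]
  rw [rowLen_addCell hi i, if_pos rfl]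
  simp only [Nat.add_sub_cancel]
  rw [Finset.erase_insert (by rw [YoungDiagram.mem_cells]; exact newCell_not_mem γ i)]

theorem delCell_injective {α : YoungDiagram} {i i' : ℕ} {hi : RemovableRow α i}
    {hi' : RemovableRow α i'} (h : delCell α i hi = delCell α i' hi') : i = i' := by
  by_contra hne
  have h1 : (i, α.rowLen i - 1) ∉ (delCell α i hi).cells := by
    rw [cells_delCell]; exact Finset.notMem_erase _ _
  rw [h, cells_delCell] at h1
  apply h1
  rw [Finset.mem_erase]
  refine ⟨?_, by rw [YoungDiagram.mem_cells]; exact lastCell_mem hi⟩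
  rw [Ne, Prod.mk.injEq]
  rintro ⟨rfl, -⟩
  exact hne rfl

theorem nBox_eq_card_removable (α : YoungDiagram) :
    nBox α = Nat.card {i : ℕ // RemovableRow α i} := by
  rw [nBox]
  symm
  apply Nat.card_eq_of_bijective (fun x => ⟨delCell α x.1 x.2, addBox_delCell α x.1 x.2⟩)
  constructor
  · rintro ⟨i, hi⟩ ⟨i', hi'⟩ hh
    simp only [Subtype.mk.injEq] at hh
    exact Subtype.ext (delCell_injective hh)
  · rintro ⟨γ, hγ⟩
    obtain ⟨i, hi, rfl⟩ := addBox_to_delCell hγ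
    exact ⟨⟨i, hi⟩, rfl⟩

instance (α : YoungDiagram) : DecidablePred (RemovableRow α) :=
  fun _ => inferInstanceAs (Decidable (_ < _))

instance (α : YoungDiagram) : DecidablePred (AddableRow α) :=
  fun _ => inferInstanceAs (Decidable (_ ∨ _))

theorem nat_card_subtype (P : ℕ → Prop) [DecidablePred P] (n : ℕ) (hb : ∀ i, P i → i < n) :
    Nat.card {i : ℕ // P i} = ((Finset.range n).filter P).card := by
  have H : ∀ x, x ∈ (Finset.range n).filter P ↔ P x := by
    intro x; simp only [Finset.mem_filter, Finset.mem_range]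
    exact ⟨fun h => h.2, fun h => ⟨hb x h, h⟩⟩
  haveI : Fintype {i : ℕ // P i} := Fintype.ofFinset _ H
  rw [Nat.card_eq_fintype_card, Fintype.card_of_subtype _ H]

theorem rowpos_iff (α : YoungDiagram) (i : ℕ) : 0 < α.rowLen i ↔ i < α.colLen 0 := by
  rw [← YoungDiagram.mem_iff_lt_rowLen, YoungDiagram.mem_iff_lt_colLen]

/-- The main count: addable rows subject to the column-length constraint, versus
removable rows. -/
theorem count_main (α : YoungDiagram) (d : ℕ) (hne : 0 < α.rowLen 0)
    (hcol : α.colLen 0 ≤ d) :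
    Nat.card {i : ℕ // AddableRow α i ∧ (0 < α.rowLen i ∨ α.colLen 0 < d)}
      = Nat.card {i : ℕ // RemovableRow α i} + (if α.colLen 0 < d then 1 else 0) := by
  classical
  set L := α.colLen 0 with hL
  have hLpos : 0 < L := (rowpos_iff α 0).mp hne
  have hbA : ∀ i, (AddableRow α i ∧ (0 < α.rowLen i ∨ L < d)) → i < L + 1 := by
    rintro i ⟨hi | hi, -⟩
    · omega
    · have : 0 < α.rowLen (i - 1) := by omega
      rw [rowpos_iff] at this
      omega
  have hbR : ∀ i, RemovableRow α i → i < L := by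
    intro i hi
    have := rowLen_pos_of_removable hi
    rw [rowpos_iff] at this
    exact this
  rw [nat_card_subtype _ (L + 1) hbA, nat_card_subtype _ L hbR]
  set R := (Finset.range L).filter (RemovableRow α) with hR
  set RC := R.filter (fun i => 0 < α.rowLen (i + 1) ∨ L < d) with hRC
  set A := (Finset.range (L + 1)).filter
      (fun i => AddableRow α i ∧ (0 < α.rowLen i ∨ L < d)) with hA
  have hAeq : A = insert 0 (RC.image (· + 1)) := by
    ext j
    cases j with
    | zero =>
      simp only [hA, Finset.mem_filter, Finset.mem_range, Finset.mem_insert]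
      refine ⟨fun _ => Or.inl trivial, fun _ => ⟨by omega, by unfold AddableRow; exact Or.inl rfl, Or.inl hne⟩⟩
    | succ k =>
      simp only [hA, hRC, hR, Finset.mem_insert, Finset.mem_image, Finset.mem_filter,
        Finset.mem_range]
      constructor
      · rintro ⟨h1, h2, h3⟩
        rcases h2 with h2 | h2
        · exact absurd h2 (by omega)
        · refine Or.inr ⟨k, ⟨⟨by omega, ?_⟩, ?_⟩, rfl⟩
          · unfold RemovableRow
            simpa using h2
          · simpa using h3
      · rintro (h | ⟨x, ⟨⟨hx1, hx2⟩, hx3⟩, hx4⟩)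
        · exact absurd h (by omega)
        · obtain rfl : x = k := by omega
          unfold RemovableRow at hx2
          refine ⟨by omega, Or.inr (by simpa using hx2), by simpa using hx3⟩
  have hcardA : A.card = RC.card + 1 := by
    rw [hAeq, Finset.card_insert_of_notMem (by simp), Finset.card_image_of_injective _
      (fun a b h => by omega)]
  by_cases hld : L < d
  · have hRCR : RC = R := Finset.filter_true_of_mem (fun i _ => Or.inr hld)
    rw [hcardA, hRCR, if_pos hld]
  · have hneg : R.filter (fun i => ¬(0 < α.rowLen (i + 1) ∨ L < d)) = {L - 1} := by
      ext j
      simp only [hR, Finset.mem_filter, Finset.mem_range, Finset.mem_singleton]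
      constructor
      · rintro ⟨⟨hj1, hj2⟩, hj3⟩
        push_neg at hj3
        have h0 : α.rowLen (j + 1) = 0 := by omega
        have : ¬ (j + 1 < L) := by
          rw [← rowpos_iff]; omega
        omega
      · rintro rfl
        have h1 : 0 < α.rowLen (L - 1) := by rw [rowpos_iff]; omega
        have h2 : α.rowLen (L - 1 + 1) = 0 := by
          have : ¬ (L - 1 + 1 < L) := by omega
          rw [← rowpos_iff] at this
          omega
        refine ⟨⟨by omega, ?_⟩, by push_neg; omega⟩
        unfold RemovableRow
        omega
    have hsum := Finset.card_filter_add_card_filter_not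
      (s := R) (p := fun i => 0 < α.rowLen (i + 1) ∨ L < d)
    rw [hneg] at hsum
    simp only [Finset.card_singleton] at hsum
    rw [← hRC] at hsum
    rw [if_neg hld, hcardA]
    omega

theorem colLen_le_iff {μ : YoungDiagram} {n : ℕ} : μ.colLen 0 ≤ n ↔ (n, 0) ∉ μ := by
  rw [YoungDiagram.mem_iff_lt_colLen, not_lt]

/-- Diagonal case of the main theorem. -/
theorem diag_count (α : YoungDiagram) (d N : ℕ) (hN : 2 ≤ N) (hcard : α.card = N - 1)
    (hcol : α.colLen 0 ≤ d) :
    Nat.card {μ : YoungDiagram // μ.card = N ∧ μ.colLen 0 ≤ d ∧ AddBox α μ ∧ AddBox α μ}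
      = nBox α + (if α.colLen 0 < d then 1 else 0) := by
  have hpos : 0 < α.cells.card := by
    show 0 < α.card
    omega
  obtain ⟨⟨a, b⟩, hab⟩ := Finset.card_pos.mp hpos
  have h00 : (0, 0) ∈ α := α.up_left_mem (Nat.zero_le a) (Nat.zero_le b)
    ((YoungDiagram.mem_cells _).mp hab)
  have hne : 0 < α.rowLen 0 := YoungDiagram.mem_iff_lt_rowLen.mp h00
  rw [nBox_eq_card_removable, ← count_main α d hne hcol]
  symm
  apply Nat.card_eq_of_bijective (f := fun x =>
    (⟨addCell α x.1 x.2.1, ?_, ?_, addBox_addCell α x.1 x.2.1, addBox_addCell α x.1 x.2.1⟩ :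
      {μ : YoungDiagram // μ.card = N ∧ μ.colLen 0 ≤ d ∧ AddBox α μ ∧ AddBox α μ}))
  · constructor
    · rintro ⟨i, hi⟩ ⟨i', hi'⟩ hh
      simp only [Subtype.mk.injEq] at hh
      exact Subtype.ext (addCell_injective hh)
    · rintro ⟨μ, hμ1, hμ2, hμ3, -⟩
      obtain ⟨i, hi, rfl⟩ := addBox_exists hμ3
      refine ⟨⟨i, hi, ?_⟩, rfl⟩
      rcases Nat.eq_zero_or_pos (α.rowLen i) with h0 | hp
      · right
        have hmem : (i, 0) ∈ addCell α i hi := by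
          rw [mem_addCell]
          left
          rw [h0]
        have h1 : i < (addCell α i hi).colLen 0 := YoungDiagram.mem_iff_lt_colLen.mp hmem
        have h2 : ¬ (i < α.colLen 0) := by rw [← rowpos_iff]; omega
        omega
      · exact Or.inl hp
  · -- card
    have := (addBox_addCell α x.1 x.2.1).2
    omega
  · -- colLen bound
    rw [colLen_le_iff]
    intro hmem
    rw [mem_addCell] at hmem
    rcases hmem with h' | h'
    · rw [Prod.mk.injEq] at h'
      obtain ⟨hdi, hrl⟩ := h'
      obtain ⟨hi, hcon⟩ := x.2
      have hi0 : x.1 ≠ 0 := by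
        intro h0
        rw [h0] at hrl
        omega
      rcases hi with h0 | hlt
      · exact hi0 h0
      · have : 0 < α.rowLen (x.1 - 1) := by omega
        rw [rowpos_iff] at this
        rcases hcon with hcon | hcon
        · omega
        · omega
    · rw [colLen_le_iff] at hcol
      exact hcol h'

/-- If two distinct diagrams both sit under μ by adding one box, μ is their union. -/
theorem eq_sup_of_addBox {a b μ : YoungDiagram} (hab : a ≠ b)
    (h1 : AddBox a μ) (h2 : AddBox b μ) : μ = a ⊔ b := by
  have hcab : b.card = a.card := by
    have := h1.2; have := h2.2; omega
  have hsub : (a ⊔ b).cells ⊆ μ.cells :=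
    YoungDiagram.cells_subset_iff.mpr (sup_le h1.1 h2.1)
  have hasub : a.cells ⊆ (a ⊔ b).cells := YoungDiagram.cells_subset_iff.mpr le_sup_left
  have hne : a.cells ≠ (a ⊔ b).cells := by
    intro h
    have hba : b.cells ⊆ a.cells := by
      rw [h]
      exact YoungDiagram.cells_subset_iff.mpr le_sup_right
    have h' : b.cells.card = a.cells.card := hcab
    have : b.cells = a.cells := Finset.eq_of_subset_of_card_le hba (by omega)
    exact hab (YoungDiagram.ext this.symm)
  have hlt : a.cells.card < (a ⊔ b).cells.card :=
    Finset.card_lt_card (ssubset_of_subset_of_ne hasub hne)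
  have hμc : μ.cells.card = a.cells.card + 1 := h1.2
  have : μ.cells = (a ⊔ b).cells :=
    (Finset.eq_of_subset_of_card_le hsub (by omega)).symm
  exact YoungDiagram.ext this

theorem card_sup_inf (a b : YoungDiagram) :
    (a ⊔ b).card + (a ⊓ b).card = a.card + b.card := by
  show (a ⊔ b).cells.card + (a ⊓ b).cells.card = a.cells.card + b.cells.card
  rw [YoungDiagram.cells_sup, YoungDiagram.cells_inf]
  exact Finset.card_union_add_card_inter _ _

end GramAux

open scoped Classical in
/-- Fix `N ≥ 2` and `d ≥ 2`.  For all partitions `α`, `β` of `N - 1` with at most `d` parts,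
the number of partitions `μ` of `N` with at most `d` parts obtained from both `α` and `β`
by adding a single box equals `(M_F^d(N-1))_{αβ} + δ_{αβ}·[α has fewer than d parts]`.
(In matrix form: `R_N^d (R_N^d)ᵀ = M_F^d(N-1) + J`.) -/
theorem gram_rows_eq_MF_add_J (N d : ℕ) (hN : 2 ≤ N) (hd : 2 ≤ d) (α β : PartLE (N - 1) d) :
    (Nat.card {μ : YoungDiagram //
        μ.card = N ∧ μ.colLen 0 ≤ d ∧ AddBox α.1 μ ∧ AddBox β.1 μ} : ℝ)
      = MF (N - 1) d α β + (if α = β ∧ α.1.colLen 0 < d then 1 else 0) := by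
  classical
  by_cases hab : α = β
  · subst hab
    rw [GramAux.diag_count α.1 d N hN α.2.1 α.2.2]
    have hMF : MF (N - 1) d α α = (nBox α.1 : ℝ) := by simp [MF]
    rw [hMF]
    by_cases hlt : α.1.colLen 0 < d
    · rw [if_pos hlt, if_pos ⟨rfl, hlt⟩]
      push_cast
      ring
    · rw [if_neg hlt, if_neg (fun h => hlt h.2)]
      push_cast
      ring
  · have hab1 : α.1 ≠ β.1 := fun h => hab (Subtype.ext h)
    have hca : α.1.card = N - 1 := α.2.1
    have hcb : β.1.card = N - 1 := β.2.1
    have hJ : (if α = β ∧ α.1.colLen 0 < d then (1:ℝ) else 0) = 0 :=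
      if_neg (fun h => hab h.1)
    simp only [MF]
    rw [if_neg hab, hJ]
    haveI hss : Subsingleton {μ : YoungDiagram //
        μ.card = N ∧ μ.colLen 0 ≤ d ∧ AddBox α.1 μ ∧ AddBox β.1 μ} := by
      constructor
      rintro ⟨μ1, -, -, h3, h4⟩ ⟨μ2, -, -, h5, h6⟩
      apply Subtype.ext
      show μ1 = μ2
      rw [GramAux.eq_sup_of_addBox hab1 h3 h4, GramAux.eq_sup_of_addBox hab1 h5 h6]
    by_cases hmv : MoveBox α.1 β.1
    · rw [if_pos hmv]
      obtain ⟨-, γ, hγa, hγb⟩ := hmv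
      have hγinf : γ.cells ⊆ (α.1 ⊓ β.1).cells :=
        YoungDiagram.cells_subset_iff.mpr (le_inf hγa.1 hγb.1)
      have hinfsub : (α.1 ⊓ β.1).cells ⊆ α.1.cells :=
        YoungDiagram.cells_subset_iff.mpr inf_le_left
      have hne2 : (α.1 ⊓ β.1).cells ≠ α.1.cells := by
        intro h
        apply hab1
        apply YoungDiagram.ext
        apply Finset.eq_of_subset_of_card_le
        · rw [← h]
          exact YoungDiagram.cells_subset_iff.mpr inf_le_right
        · have h1 : α.1.cells.card = N - 1 := hca
          have h2 : β.1.cells.card = N - 1 := hcb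
          omega
      have hlt2 : (α.1 ⊓ β.1).cells.card < α.1.cells.card :=
        Finset.card_lt_card (ssubset_of_subset_of_ne hinfsub hne2)
      have hγle : γ.cells.card ≤ (α.1 ⊓ β.1).cells.card := Finset.card_le_card hγinf
      have hγc : α.1.cells.card = γ.cells.card + 1 := hγa.2
      have hinfc : (α.1 ⊓ β.1).cells.card = γ.cells.card := by omega
      have hsi := GramAux.card_sup_inf α.1 β.1
      have hsi' : (α.1 ⊔ β.1).cells.card + (α.1 ⊓ β.1).cells.card
          = α.1.cells.card + β.1.cells.card := hsi
      have hca' : α.1.cells.card = N - 1 := hca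
      have hcb' : β.1.cells.card = N - 1 := hcb
      have hsupc : (α.1 ⊔ β.1).cells.card = N := by omega
      have hcolsup : (α.1 ⊔ β.1).colLen 0 ≤ d := by
        rw [GramAux.colLen_le_iff]
        intro h
        rw [YoungDiagram.mem_sup] at h
        rcases h with h | h
        · exact GramAux.colLen_le_iff.mp α.2.2 h
        · exact GramAux.colLen_le_iff.mp β.2.2 h
      have hone : Nat.card {μ : YoungDiagram //
          μ.card = N ∧ μ.colLen 0 ≤ d ∧ AddBox α.1 μ ∧ AddBox β.1 μ} = 1 := by
        rw [Nat.card_eq_one_iff_unique]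
        refine ⟨hss, ⟨⟨α.1 ⊔ β.1, hsupc, hcolsup,
          ⟨le_sup_left, ?_⟩, ⟨le_sup_right, ?_⟩⟩⟩⟩
        · show (α.1 ⊔ β.1).cells.card = α.1.cells.card + 1
          omega
        · show (α.1 ⊔ β.1).cells.card = β.1.cells.card + 1
          omega
      rw [hone]
      norm_num
    · rw [if_neg hmv]
      haveI : IsEmpty {μ : YoungDiagram //
          μ.card = N ∧ μ.colLen 0 ≤ d ∧ AddBox α.1 μ ∧ AddBox β.1 μ} := by
        constructor
        rintro ⟨μ, hc, -, h1, h2⟩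
        apply hmv
        refine ⟨hab1, α.1 ⊓ β.1, ⟨inf_le_left, ?_⟩, ⟨inf_le_right, ?_⟩⟩
        · show α.1.cells.card = (α.1 ⊓ β.1).cells.card + 1
          have hsup := GramAux.eq_sup_of_addBox hab1 h1 h2
          have hsi' : (α.1 ⊔ β.1).cells.card + (α.1 ⊓ β.1).cells.card
              = α.1.cells.card + β.1.cells.card := GramAux.card_sup_inf α.1 β.1
          have hμc : μ.cells.card = N := hc
          have hμs : μ.cells.card = (α.1 ⊔ β.1).cells.card := by rw [hsup]
          have hca' : α.1.cells.card = N - 1 := hca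
          have hcb' : β.1.cells.card = N - 1 := hcb
          omega
        · show β.1.cells.card = (α.1 ⊓ β.1).cells.card + 1
          have hsup := GramAux.eq_sup_of_addBox hab1 h1 h2
          have hsi' : (α.1 ⊔ β.1).cells.card + (α.1 ⊓ β.1).cells.card
              = α.1.cells.card + β.1.cells.card := GramAux.card_sup_inf α.1 β.1
          have hμc : μ.cells.card = N := hc
          have hμs : μ.cells.card = (α.1 ⊔ β.1).cells.card := by rw [hsup]
          have hca' : α.1.cells.card = N - 1 := hca
          have hcb' : β.1.cells.card = N - 1 := hcb
          omega
      rw [Nat.card_of_isEmpty]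
      norm_num
end

section
/- Fix N ≥ 2 and d ≥ 2. For each partition α of N−1 with at most d parts, let r_α be the real vector indexed by the partitions μ of N with at most d parts, with r_α(μ) = 1 if μ is obtained from α by adding a single box and r_α(μ) = 0 otherwise. Then the family of vectors (r_α), indexed by all partitions α of N−1 with at most d parts, is linearly independent over ℝ; equivalently, the 0/1 matrix R_N^d with these rows has full row rank. -/
/-- Add a box at the end of the first row. -/
def addTop (α : YoungDiagram) : YoungDiagram :=
  ⟨insert (0, α.rowLen 0) α.cells, by
    rintro ⟨x, y⟩ ⟨a, b⟩ hle hxy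
    rw [Prod.mk_le_mk] at hle
    obtain ⟨h1, h2⟩ := hle
    simp only [Finset.coe_insert, Set.mem_insert_iff, Finset.mem_coe, Prod.mk.injEq] at hxy ⊢
    rcases hxy with ⟨hx, hy⟩ | h
    · subst hx; subst hy
      have ha : a = 0 := Nat.le_zero.mp h1
      subst ha
      rcases lt_or_eq_of_le h2 with hb | hb
      · right
        have : (0, b) ∈ α := YoungDiagram.mem_iff_lt_rowLen.mpr hb
        simpa [YoungDiagram.mem_cells] using this
      · left; simp [hb]
    · right
      have : (a, b) ∈ α := α.up_left_mem h1 h2 (by simpa [YoungDiagram.mem_cells] using h)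
      simpa [YoungDiagram.mem_cells] using this⟩

lemma top_not_mem (α : YoungDiagram) : (0, α.rowLen 0) ∉ α := by
  rw [YoungDiagram.mem_iff_lt_rowLen]; exact lt_irrefl _

lemma addTop_card (α : YoungDiagram) : (addTop α).card = α.card + 1 := by
  have : (0, α.rowLen 0) ∉ α.cells := by
    simpa [YoungDiagram.mem_cells] using top_not_mem α
  simp [YoungDiagram.card, addTop, Finset.card_insert_of_notMem this]

lemma addBox_addTop (α : YoungDiagram) : AddBox α (addTop α) := by
  refine ⟨?_, addTop_card α⟩
  rw [← YoungDiagram.cells_subset_iff]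
  exact Finset.subset_insert _ _

lemma addTop_colLen {α : YoungDiagram} {d : ℕ} (hd : 2 ≤ d) (h : α.colLen 0 ≤ d) :
    (addTop α).colLen 0 ≤ d := by
  by_contra hcon
  push_neg at hcon
  have hmem : (d, 0) ∈ addTop α := YoungDiagram.mem_iff_lt_colLen.mpr hcon
  have : (d, 0) ∈ (addTop α).cells := by simpa [YoungDiagram.mem_cells] using hmem
  simp only [addTop, Finset.mem_insert, Prod.mk.injEq] at this
  rcases this with ⟨h1, _⟩ | h1
  · omega
  · have : (d, 0) ∈ α := by simpa [YoungDiagram.mem_cells] using h1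
    rw [YoungDiagram.mem_iff_lt_colLen] at this
    omega

lemma addBox_addTop_cases {α β : YoungDiagram} (h : AddBox β (addTop α)) :
    β = α ∨ α.rowLen 0 < β.rowLen 0 := by
  obtain ⟨hle, hcard⟩ := h
  have hsub : β.cells ⊆ (addTop α).cells := YoungDiagram.cells_subset_iff.mpr hle
  by_cases hmem : (0, α.rowLen 0) ∈ β
  · right
    rw [YoungDiagram.mem_iff_lt_rowLen] at hmem
    exact hmem
  · left
    have hsub' : β.cells ⊆ α.cells := by
      intro c hc
      have := hsub hc
      simp only [addTop, Finset.mem_insert] at this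
      rcases this with h | h
      · exact absurd (by simpa [YoungDiagram.mem_cells, h] using hc) hmem
      · exact h
    have hc : α.cells.card ≤ β.cells.card := by
      have := addTop_card α
      unfold YoungDiagram.card at *
      omega
    exact YoungDiagram.ext (Finset.eq_of_subset_of_card_le hsub' hc)

open scoped Classical in
/-- Fix `N ≥ 2` and `d ≥ 2`.  For each partition `α` of `N - 1` with at most `d` parts, let
`r_α` be the `0/1` vector indexed by partitions `μ` of `N` with at most `d` parts recording
whether `μ` is obtained from `α` by adding a single box.  Then the family `(r_α)` is linearly
independent over `ℝ`, i.e. the matrix `R_N^d` has full row rank. -/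

theorem rows_RNd_linearIndependent (N d : ℕ) (hN : 2 ≤ N) (hd : 2 ≤ d) :
    LinearIndependent ℝ (fun (α : PartLE (N - 1) d) (μ : PartLE N d) =>
      if AddBox α.1 μ.1 then (1 : ℝ) else 0) := by
  classical
  rw [Fintype.linearIndependent_iff]
  intro g hg
  by_contra hcon
  push_neg at hcon
  obtain ⟨α₀, hα₀⟩ := hcon
  set S : Finset (PartLE (N - 1) d) := Finset.univ.filter (fun α => g α ≠ 0) with hS
  have hSne : S.Nonempty := ⟨α₀, by simp [hS, hα₀]⟩
  obtain ⟨β₀, hβ₀S, hβ₀max⟩ := S.exists_max_image (fun α => (α.1.rowLen 0)) hSne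
  have hgβ₀ : g β₀ ≠ 0 := by simpa [hS] using hβ₀S
  have hμcard : (addTop β₀.1).card = N := by
    rw [addTop_card, β₀.2.1]; omega
  have hμcol : (addTop β₀.1).colLen 0 ≤ d := addTop_colLen hd β₀.2.2
  set μ : PartLE N d := ⟨addTop β₀.1, hμcard, hμcol⟩ with hμ
  have hval := congrFun hg μ
  rw [Finset.sum_apply] at hval
  have hsum : ∀ α ∈ Finset.univ, α ≠ β₀ →
      (g α • fun ν : PartLE N d => if AddBox α.1 ν.1 then (1:ℝ) else 0) μ = 0 := by
    intro α _ hne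
    simp only [Pi.smul_apply, smul_eq_mul]
    by_cases hab : AddBox α.1 μ.1
    · rcases addBox_addTop_cases hab with heq | hlt
      · exact absurd (Subtype.ext heq) hne
      · have hαS : α ∉ S := fun hmem => absurd (hβ₀max α hmem) (by omega)
        have : g α = 0 := by
          by_contra h'
          exact hαS (by simp [hS, h'])
        simp [this]
    · simp [hab]
  rw [Finset.sum_eq_single_of_mem β₀ (Finset.mem_univ _) hsum] at hval
  have : AddBox β₀.1 μ.1 := addBox_addTop β₀.1
  simp only [Pi.smul_apply, smul_eq_mul, if_pos this, mul_one] at hval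
  exact hgβ₀ hval
end

section
/- Fix N ≥ 2 and d ≥ 2. The nonnegative matrix M_F^d(N) is primitive: there exists a positive integer q such that every entry of the matrix power (M_F^d(N))^q is strictly positive. -/
/-! ### Auxiliary development -/

lemma rowLen_le_of_not_mem {μ : YoungDiagram} {i n : ℕ} (h : (i, n) ∉ μ) : μ.rowLen i ≤ n := by
  by_contra h'
  push_neg at h'
  exact h (YoungDiagram.mem_iff_lt_rowLen.mpr h')

lemma colLen_le_of_not_mem {μ : YoungDiagram} {j n : ℕ} (h : (n, j) ∉ μ) : μ.colLen j ≤ n := by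
  by_contra h'
  push_neg at h'
  exact h (YoungDiagram.mem_iff_lt_colLen.mpr h')

lemma rowLen_eq_of {μ : YoungDiagram} {i n : ℕ} (h1 : (i, n) ∉ μ)
    (h2 : ∀ m, m < n → (i, m) ∈ μ) : μ.rowLen i = n := by
  refine le_antisymm (rowLen_le_of_not_mem h1) ?_
  rcases Nat.eq_zero_or_pos n with rfl | hn
  · exact Nat.zero_le _
  · have := YoungDiagram.mem_iff_lt_rowLen.mp (h2 (n - 1) (by omega))
    omega

/-- The single-row Young diagram with `N` boxes. -/
def rowYD (N : ℕ) : YoungDiagram where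
  cells := {0} ×ˢ Finset.range N
  isLowerSet := by
    rintro ⟨x, y⟩ ⟨a, b⟩ hle h
    obtain ⟨h1, h2⟩ := Prod.mk_le_mk.mp hle
    simp only [Finset.coe_product, Set.mem_prod, Finset.coe_singleton, Set.mem_singleton_iff,
      Finset.coe_range, Set.mem_Iio] at h ⊢
    omega

lemma mem_rowYD {N i j : ℕ} : (i, j) ∈ rowYD N ↔ i = 0 ∧ j < N := by
  show (i, j) ∈ ({0} ×ˢ Finset.range N) ↔ _
  simp only [Finset.mem_product, Finset.mem_singleton, Finset.mem_range]

lemma card_rowYD (N : ℕ) : (rowYD N).card = N := by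
  show ({0} ×ˢ Finset.range N).card = N
  simp

lemma colLen_rowYD {N : ℕ} (hN : 1 ≤ N) : (rowYD N).colLen 0 = 1 := by
  refine le_antisymm (colLen_le_of_not_mem ?_) ?_
  · rw [mem_rowYD]; omega
  · have := YoungDiagram.mem_iff_lt_colLen.mp (mem_rowYD.mpr ⟨rfl, hN⟩)
    omega

lemma mem_zero_zero {μ : YoungDiagram} (h : 0 < μ.card) : (0, 0) ∈ μ := by
  obtain ⟨⟨a, b⟩, hab⟩ := Finset.card_pos.mp h
  exact μ.up_left_mem (Nat.zero_le _) (Nat.zero_le _) ((YoungDiagram.mem_cells _).mp hab)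

lemma rowLen_zero_pos {μ : YoungDiagram} (h : 0 < μ.card) : 0 < μ.rowLen 0 :=
  YoungDiagram.mem_iff_lt_rowLen.mp (mem_zero_zero h)

/-- If `μ` has `N` boxes and its first row has length at least `N`, then `μ` is the
single-row diagram. -/
lemma eq_rowYD_of_rowLen {μ : YoungDiagram} {N : ℕ} (hcard : μ.card = N)
    (hrow : N ≤ μ.rowLen 0) : μ = rowYD N := by
  have hsub : (rowYD N).cells ⊆ μ.cells := by
    rintro ⟨i, j⟩ hij
    have := mem_rowYD.mp ((YoungDiagram.mem_cells _).mp hij)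
    obtain ⟨rfl, hj⟩ := this
    exact (YoungDiagram.mem_cells _).mpr (YoungDiagram.mem_iff_lt_rowLen.mpr (by omega))
  have hcards : μ.cells.card ≤ (rowYD N).cells.card := by
    have e1 : μ.cells.card = μ.card := rfl
    have e2 : (rowYD N).cells.card = (rowYD N).card := rfl
    rw [e1, e2, hcard, card_rowYD]
  have := Finset.eq_of_subset_of_card_le hsub hcards
  exact (YoungDiagram.ext this).symm

/-- If `μ` has `N` boxes but first row shorter than `N`, its first column has height ≥ 2. -/
lemma two_le_colLen {μ : YoungDiagram} {N : ℕ} (hcard : μ.card = N)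
    (hrow : μ.rowLen 0 < N) : 2 ≤ μ.colLen 0 := by
  by_contra h
  push_neg at h
  have hsub : μ.cells ⊆ {0} ×ˢ Finset.range (μ.rowLen 0) := by
    rintro ⟨i, j⟩ hij
    have hm := (YoungDiagram.mem_cells _).mp hij
    have hi : i < μ.colLen 0 :=
      YoungDiagram.mem_iff_lt_colLen.mp (μ.up_left_mem le_rfl (Nat.zero_le _) hm)
    have : i = 0 := by omega
    subst this
    simp [YoungDiagram.mem_iff_lt_rowLen.mp hm]
  have := Finset.card_le_card hsub
  have e1 : μ.cells.card = μ.card := rfl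
  simp only [Finset.card_product, Finset.card_singleton, Finset.card_range, one_mul] at this
  omega

/-- Erasing a removable corner from a Young diagram. -/
def eraseYD (μ : YoungDiagram) (i j : ℕ) (h1 : (i + 1, j) ∉ μ) (h2 : (i, j + 1) ∉ μ) :
    YoungDiagram where
  cells := μ.cells.erase (i, j)
  isLowerSet := by
    rintro ⟨x, y⟩ ⟨a, b⟩ hle hmem
    obtain ⟨hax, hby⟩ := Prod.mk_le_mk.mp hle
    simp only [Finset.coe_erase, Set.mem_diff, Set.mem_singleton_iff, Finset.mem_coe] at hmem ⊢
    obtain ⟨hxy, hne⟩ := hmem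
    refine ⟨μ.isLowerSet hle hxy, ?_⟩
    intro hab
    rw [Prod.mk.injEq] at hab
    rcases Nat.lt_or_ge i x with hx | hx
    · exact h1 (μ.up_left_mem (by omega) (by omega) ((YoungDiagram.mem_cells _).mp hxy))
    · rcases Nat.lt_or_ge j y with hy | hy
      · exact h2 (μ.up_left_mem (by omega) (by omega) ((YoungDiagram.mem_cells _).mp hxy))
      · exact absurd (by rw [Prod.mk.injEq]; omega : (x, y) = (i, j)) hne

lemma mem_eraseYD {μ : YoungDiagram} {i j : ℕ} {h1 : (i + 1, j) ∉ μ} {h2 : (i, j + 1) ∉ μ}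
    {c : ℕ × ℕ} : c ∈ eraseYD μ i j h1 h2 ↔ c ≠ (i, j) ∧ c ∈ μ := by
  show c ∈ μ.cells.erase (i, j) ↔ _
  rw [Finset.mem_erase, YoungDiagram.mem_cells]

/-- Adding a box at the end of the first row of a Young diagram. -/
def addTopYD (μ : YoungDiagram) : YoungDiagram where
  cells := insert (0, μ.rowLen 0) μ.cells
  isLowerSet := by
    rintro ⟨x, y⟩ ⟨a, b⟩ hle hmem
    obtain ⟨hax, hby⟩ := Prod.mk_le_mk.mp hle
    simp only [Finset.coe_insert, Set.mem_insert_iff, Finset.mem_coe, Prod.mk.injEq] at hmem ⊢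
    rcases hmem with ⟨rfl, rfl⟩ | hmem
    · have ha : a = 0 := Nat.le_zero.mp hax
      subst ha
      rcases Nat.lt_or_ge b (μ.rowLen 0) with h | h
      · exact Or.inr ((YoungDiagram.mem_cells _).mpr (YoungDiagram.mem_iff_lt_rowLen.mpr h))
      · exact Or.inl ⟨rfl, le_antisymm hby h⟩
    · exact Or.inr (μ.isLowerSet hle hmem)

lemma mem_addTopYD {μ : YoungDiagram} {c : ℕ × ℕ} :
    c ∈ addTopYD μ ↔ c = (0, μ.rowLen 0) ∨ c ∈ μ := by
  show c ∈ insert (0, μ.rowLen 0) μ.cells ↔ _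
  rw [Finset.mem_insert, YoungDiagram.mem_cells]

lemma top_not_mem_s12 (μ : YoungDiagram) : (0, μ.rowLen 0) ∉ μ := by
  rw [YoungDiagram.mem_iff_lt_rowLen]
  omega

/-- Every nonempty Young diagram has a removable corner. -/
lemma exists_corner (μ : YoungDiagram) (h : 0 < μ.card) : ∃ α : YoungDiagram, AddBox α μ := by
  have h00 := mem_zero_zero h
  have hcol : 0 < μ.colLen 0 := YoungDiagram.mem_iff_lt_colLen.mp h00
  set k := μ.colLen 0 - 1 with hk
  have hk0 : (k, 0) ∈ μ := YoungDiagram.mem_iff_lt_colLen.mpr (by omega)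
  have hr : 0 < μ.rowLen k := YoungDiagram.mem_iff_lt_rowLen.mp hk0
  set r := μ.rowLen k - 1 with hr'
  have h1 : (k + 1, r) ∉ μ := by
    intro hmem
    have : (k + 1, 0) ∈ μ := μ.up_left_mem le_rfl (Nat.zero_le _) hmem
    have := YoungDiagram.mem_iff_lt_colLen.mp this
    omega
  have h2 : (k, r + 1) ∉ μ := by
    rw [YoungDiagram.mem_iff_lt_rowLen]
    omega
  have hcorner : (k, r) ∈ μ := YoungDiagram.mem_iff_lt_rowLen.mpr (by omega)
  refine ⟨eraseYD μ k r h1 h2, ?_, ?_⟩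
  · rw [← YoungDiagram.cells_subset_iff]
    exact Finset.erase_subset _ _
  · show μ.cells.card = (μ.cells.erase (k, r)).card + 1
    rw [Finset.card_erase_of_mem ((YoungDiagram.mem_cells _).mpr hcorner)]
    have e : μ.cells.card = μ.card := rfl
    omega

instance finAddBox (μ : YoungDiagram) : Finite {α : YoungDiagram // AddBox α μ} := by
  apply Finite.of_injective
    (f := fun α : {α : YoungDiagram // AddBox α μ} =>
      (⟨α.1.cells, Finset.mem_powerset.mpr (YoungDiagram.cells_subset_iff.mpr α.2.1)⟩ :
        μ.cells.powerset))
  rintro ⟨a, ha⟩ ⟨b, hb⟩ h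
  simp only [Subtype.mk.injEq] at h ⊢
  exact YoungDiagram.ext h

lemma nBox_pos {μ : YoungDiagram} (h : 0 < μ.card) : 0 < nBox μ := by
  rw [nBox, Nat.card_pos_iff]
  obtain ⟨α, hα⟩ := exists_corner μ h
  exact ⟨⟨⟨α, hα⟩⟩, finAddBox μ⟩

lemma moveBox_symm {μ ν : YoungDiagram} (h : MoveBox μ ν) : MoveBox ν μ :=
  ⟨h.1.symm, h.2.imp fun _ hα => ⟨hα.2, hα.1⟩⟩

/-- The key step: a partition of `N` with at least two rows can be moved to one with a
longer first row. -/
lemma exists_step {N d : ℕ} (hN : 2 ≤ N) (μ : PartLE N d) (hcol : 2 ≤ μ.1.colLen 0) :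
    ∃ ν : PartLE N d, MoveBox μ.1 ν.1 ∧ ν.1.rowLen 0 = μ.1.rowLen 0 + 1 := by
  obtain ⟨μ, hcard, hd⟩ := μ
  replace hcol : 2 ≤ μ.colLen 0 := hcol
  have ecard : μ.cells.card = μ.card := rfl
  have hpos : 0 < μ.card := by omega
  set k := μ.colLen 0 - 1 with hkdef
  have hk1 : 1 ≤ k := by omega
  have hk0 : (k, 0) ∈ μ := YoungDiagram.mem_iff_lt_colLen.mpr (by omega)
  have hr : 0 < μ.rowLen k := YoungDiagram.mem_iff_lt_rowLen.mp hk0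
  set r := μ.rowLen k - 1 with hrdef
  have h1 : (k + 1, r) ∉ μ := by
    intro hmem
    have : (k + 1, 0) ∈ μ := μ.up_left_mem le_rfl (Nat.zero_le _) hmem
    have := YoungDiagram.mem_iff_lt_colLen.mp this
    omega
  have h2 : (k, r + 1) ∉ μ := by
    rw [YoungDiagram.mem_iff_lt_rowLen]
    omega
  have hcorner : (k, r) ∈ μ := YoungDiagram.mem_iff_lt_rowLen.mpr (by omega)
  set α := eraseYD μ k r h1 h2 with hαdef
  set c := μ.rowLen 0 with hcdef
  have hc1 : 1 ≤ c := rowLen_zero_pos hpos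
  -- row 0 of α equals row 0 of μ
  have hmemα : ∀ p : ℕ × ℕ, p ∈ α ↔ p ≠ (k, r) ∧ p ∈ μ := fun p => mem_eraseYD
  have hα0 : α.rowLen 0 = c := by
    apply rowLen_eq_of
    · rw [hmemα]
      rintro ⟨-, hmem⟩
      exact top_not_mem_s12 μ hmem
    · intro m hm
      rw [hmemα]
      constructor
      · intro hp
        rw [Prod.mk.injEq] at hp
        omega
      · exact YoungDiagram.mem_iff_lt_rowLen.mpr hm
  set ν := addTopYD α with hνdef
  have hmemν : ∀ p : ℕ × ℕ, p ∈ ν ↔ p = (0, c) ∨ p ∈ α := by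
    intro p
    rw [hνdef, mem_addTopYD, hα0]
  have htopα : (0, c) ∉ α := by
    rw [hmemα]
    rintro ⟨-, hmem⟩
    exact top_not_mem_s12 μ hmem
  have hαcard : α.card = N - 1 := by
    show (μ.cells.erase (k, r)).card = N - 1
    rw [Finset.card_erase_of_mem ((YoungDiagram.mem_cells _).mpr hcorner)]
    omega
  have eα : α.cells.card = α.card := rfl
  have hνcard : ν.card = N := by
    show (insert ((0 : ℕ), α.rowLen 0) α.cells).card = N
    rw [Finset.card_insert_of_notMem (by rw [hα0]; exact fun hh => htopα ((YoungDiagram.mem_cells _).mp hh))]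
    show α.card + 1 = N
    omega
  have hνrow : ν.rowLen 0 = c + 1 := by
    apply rowLen_eq_of
    · rw [hmemν]
      rintro (hp | hmem)
      · simp only [Prod.mk.injEq] at hp
        omega
      · rw [hmemα] at hmem
        exact top_not_mem_s12 μ (μ.up_left_mem le_rfl (by omega : c ≤ c + 1) hmem.2)
    · intro m hm
      rw [hmemν]
      rcases Nat.lt_or_ge m c with h | h
      · refine Or.inr ?_
        rw [hmemα]
        exact ⟨by simp only [ne_eq, Prod.mk.injEq, not_and]; omega, YoungDiagram.mem_iff_lt_rowLen.mpr h⟩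
      · exact Or.inl (by rw [Prod.mk.injEq]; omega)
  have hνcol : ν.colLen 0 ≤ d := by
    have h1' : (μ.colLen 0, 0) ∉ ν := by
      rw [hmemν]
      rintro (hp | hmem)
      · simp only [Prod.mk.injEq] at hp
        omega
      · rw [hmemα] at hmem
        have := YoungDiagram.mem_iff_lt_colLen.mp hmem.2
        omega
    exact le_trans (colLen_le_of_not_mem h1') hd
  have hne : μ ≠ ν := by
    intro h
    rw [h, hνrow] at hcdef
    omega
  refine ⟨⟨ν, hνcard, hνcol⟩, ⟨hne, α, ⟨?_, ?_⟩, ⟨?_, ?_⟩⟩, hνrow⟩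
  · rw [← YoungDiagram.cells_subset_iff]
    exact Finset.erase_subset _ _
  · show μ.card = α.card + 1
    omega
  · rw [← YoungDiagram.cells_subset_iff]
    exact Finset.subset_insert _ _
  · show ν.card = α.card + 1
    omega

/-- `rowYD N` as an element of `PartLE N d`. -/
def rowPart (N d : ℕ) (hN : 1 ≤ N) (hd : 1 ≤ d) : PartLE N d :=
  ⟨rowYD N, card_rowYD N, by rw [colLen_rowYD hN]; omega⟩

lemma MF_nonneg (N d : ℕ) (μ ν : PartLE N d) : 0 ≤ MF N d μ ν := by
  simp only [MF]
  split_ifs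
  · positivity
  · norm_num
  · exact le_refl 0

lemma MF_diag_pos {N d : ℕ} (hN : 1 ≤ N) (μ : PartLE N d) : 0 < MF N d μ μ := by
  simp only [MF, if_pos rfl]
  exact_mod_cast nBox_pos (by rw [μ.2.1]; omega)

lemma MF_move_pos {N d : ℕ} (μ ν : PartLE N d) (h : MoveBox μ.1 ν.1) : 0 < MF N d μ ν := by
  have hne : μ ≠ ν := fun e => h.1 (by rw [e])
  simp only [MF, if_neg hne, if_pos h]
  norm_num

lemma MF_pow_nonneg (N d q : ℕ) (μ ν : PartLE N d) : 0 ≤ (MF N d ^ q) μ ν := by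
  induction q generalizing μ ν with
  | zero =>
    rw [pow_zero, Matrix.one_apply]
    split_ifs <;> norm_num
  | succ q ih =>
    rw [pow_succ, Matrix.mul_apply]
    exact Finset.sum_nonneg fun σ _ => mul_nonneg (ih μ σ) (MF_nonneg N d σ ν)

lemma MF_step_pos {N d q : ℕ} {μ ρ ν : PartLE N d} (h1 : 0 < MF N d μ ρ)
    (h2 : 0 < (MF N d ^ q) ρ ν) : 0 < (MF N d ^ (q + 1)) μ ν := by
  rw [pow_succ', Matrix.mul_apply]
  apply Finset.sum_pos'
  · intro σ _
    exact mul_nonneg (MF_nonneg N d μ σ) (MF_pow_nonneg N d q σ ν)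
  · exact ⟨ρ, Finset.mem_univ ρ, mul_pos h1 h2⟩

lemma MF_symm (N d : ℕ) : (MF N d).transpose = MF N d := by
  ext μ ν
  simp only [Matrix.transpose_apply, MF]
  by_cases h : μ = ν
  · subst h; rfl
  · rw [if_neg (fun e => h e.symm), if_neg h]
    by_cases hm : MoveBox μ.1 ν.1
    · rw [if_pos hm, if_pos (moveBox_symm hm)]
    · rw [if_neg hm, if_neg (fun e => hm (moveBox_symm e))]

lemma MF_pow_symm (N d q : ℕ) (μ ν : PartLE N d) : (MF N d ^ q) μ ν = (MF N d ^ q) ν μ := by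
  conv_lhs => rw [← MF_symm N d]
  rw [← Matrix.transpose_pow, Matrix.transpose_apply]

lemma MF_pow_row_pos {N d : ℕ} (hN : 2 ≤ N) (hd : 2 ≤ d) :
    ∀ q : ℕ, ∀ μ : PartLE N d, N - μ.1.rowLen 0 ≤ q →
      0 < (MF N d ^ q) μ (rowPart N d (by omega) (by omega)) := by
  intro q
  induction q with
  | zero =>
    intro μ h
    have hrow : N ≤ μ.1.rowLen 0 := by omega
    have heq : μ = rowPart N d (by omega) (by omega) :=
      Subtype.ext (eq_rowYD_of_rowLen μ.2.1 hrow)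
    rw [heq, pow_zero, Matrix.one_apply_eq]
    norm_num
  | succ q ih =>
    intro μ h
    rcases Nat.lt_or_ge (μ.1.rowLen 0) N with hlt | hge
    · have hcol := two_le_colLen μ.2.1 hlt
      obtain ⟨ν, hmove, hrow⟩ := exists_step hN μ hcol
      exact MF_step_pos (MF_move_pos μ ν hmove) (ih ν (by omega))
    · exact MF_step_pos (MF_diag_pos (by omega) μ) (ih μ (by omega))

/-- Fix `N ≥ 2` and `d ≥ 2`.  The nonnegative matrix `M_F^d(N)` is primitive: there is a
positive integer `q` such that every entry of `(M_F^d(N))^q` is strictly positive. -/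
theorem MF_primitive (N d : ℕ) (hN : 2 ≤ N) (hd : 2 ≤ d) :
    ∃ q : ℕ, 0 < q ∧ ∀ μ ν : PartLE N d, 0 < ((MF N d) ^ q) μ ν := by
  refine ⟨2 * (N - 1), by omega, fun μ ν => ?_⟩
  have hA : ∀ ρ : PartLE N d, 0 < (MF N d ^ (N - 1)) ρ (rowPart N d (by omega) (by omega)) := by
    intro ρ
    apply MF_pow_row_pos hN hd
    have : 0 < ρ.1.rowLen 0 := rowLen_zero_pos (by rw [ρ.2.1]; omega)
    omega
  rw [two_mul, pow_add, Matrix.mul_apply]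
  apply Finset.sum_pos'
  · intro σ _
    exact mul_nonneg (MF_pow_nonneg N d _ μ σ) (MF_pow_nonneg N d _ σ ν)
  · refine ⟨rowPart N d (by omega) (by omega), Finset.mem_univ _,
      mul_pos (hA μ) ?_⟩
    rw [MF_pow_symm]
    exact hA ν
end
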